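/- arXiv:math/0311013 — 8 statements merged into one kernel-verified Lean document; each statement's English description precedes it below -/
import Mathlib

section
/- Let f : (a,b) → ℝ be n times differentiable with n ≥ 1, and suppose |f⁽ⁿ⁾(x)| ≥ λ > 0 for all x ∈ (a,b). Then the Lebesgue measure of the sublevel set {x ∈ (a,b) : |f(x)| ≤ α} is at most (n! · 2^(2n-1))^(1/n) · (α/λ)^(1/n). -/
/-!
For nodes `x₀ < ⋯ < xₙ` in `(a, b)`, applying Rolle's theorem `n` times to `f` minus its
interpolation polynomial gives `f⁽ⁿ⁾(ξ) = n! · f[x₀, …, xₙ]` for some `ξ`,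
so `λ ≤ n! · |f[x₀, …, xₙ]|`.
If the sublevel set `E` has measure larger than `m`, its distribution function
`t ↦ |E ∩ (-∞, t)|` is monotone and 1-Lipschitz, so for any nodes `cᵢ ∈ [0, 1]` one can
pick nodes `xᵢ ∈ E` with `|xᵢ - xⱼ| ≥ m |cᵢ - cⱼ|`; then
`|f[x₀, …, xₙ]| ≤ α m⁻ⁿ ∑ᵢ ∏_{j ≠ i} |cᵢ - cⱼ|⁻¹`. For the extremal points of the Chebyshev
polynomial `Tₙ` moved to `[0, 1]` this sum is the divided difference of the shifted polynomial,
which takes the values `±1` there with alternating signs, i.e. its leading coefficient `2^(2n-1)`.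
-/

open Polynomial MeasureTheory Set Real
open scoped Nat

section DividedDifference

open Finset

-- The divided difference `f[x₀, …, xₙ]`, in Lagrange form.
noncomputable def divDiff {n : ℕ} (x : Fin (n + 1) → ℝ) (f : ℝ → ℝ) : ℝ :=
  ∑ i, f (x i) / ∏ j ∈ univ.erase i, (x i - x j)

theorem divDiff_congr {n : ℕ} (x : Fin (n + 1) → ℝ) {f g : ℝ → ℝ} (h : ∀ i, f (x i) = g (x i)) :
    divDiff x f = divDiff x g := by
  simp only [divDiff, h]

theorem eval_iterate_derivative_eq_factorial_mul_divDiff {n : ℕ} {x : Fin (n + 1) → ℝ}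
    (hx : Function.Injective x) {P : ℝ[X]} (hP : P.natDegree ≤ n) (t : ℝ) :
    (derivative^[n] P).eval t = n ! * divDiff x P.eval := by
  have hdeg : P.degree < #(univ : Finset (Fin (n + 1))) := by
    rw [card_univ, Fintype.card_fin]
    exact (degree_le_of_natDegree_le hP).trans_lt (by exact_mod_cast n.lt_succ_self)
  rw [Lagrange.eval_iterate_derivative_eq_sum hx.injOn hdeg (by simp)]
  simp [divDiff]

theorem divDiff_eval_eq_leadingCoeff {n : ℕ} {x : Fin (n + 1) → ℝ}
    (hx : Function.Injective x) {P : ℝ[X]} (hP : P.natDegree = n) :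
    divDiff x P.eval = P.leadingCoeff := by
  by_cases h0 : P = 0
  · simp [h0, divDiff]
  rw [Lagrange.leadingCoeff_eq_sum (s := univ) hx.injOn]
  · rfl
  · rw [degree_eq_natDegree h0, hP]; simp

theorem abs_divDiff_le {n : ℕ} {x c : Fin (n + 1) → ℝ} {f : ℝ → ℝ} {α m : ℝ}
    (hc : Function.Injective c) (hm : 0 < m) (hf : ∀ i, |f (x i)| ≤ α)
    (hxc : ∀ i j, m * |c i - c j| ≤ |x i - x j|) :
    |divDiff x f| ≤ α / m ^ n * ∑ i, (∏ j ∈ univ.erase i, |c i - c j|)⁻¹ := by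
  have hα : 0 ≤ α := (abs_nonneg _).trans (hf 0)
  have hprod : ∀ i,
      m ^ n * ∏ j ∈ univ.erase i, |c i - c j| ≤ ∏ j ∈ univ.erase i, |x i - x j| := by
    intro i
    calc m ^ n * ∏ j ∈ univ.erase i, |c i - c j| = ∏ j ∈ univ.erase i, m * |c i - c j| := by
          rw [prod_mul_distrib, prod_const, card_erase_of_mem (mem_univ i), card_univ,
            Fintype.card_fin, Nat.add_sub_cancel]
      _ ≤ ∏ j ∈ univ.erase i, |x i - x j| :=
          prod_le_prod (fun _ _ ↦ by positivity) fun j _ ↦ hxc i j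
  rw [mul_sum]
  refine (abs_sum_le_sum_abs _ _).trans (sum_le_sum fun i _ ↦ ?_)
  have hpos : 0 < ∏ j ∈ univ.erase i, |c i - c j| :=
    prod_pos fun j hj ↦ abs_pos.2 (sub_ne_zero.2 (hc.ne (ne_of_mem_erase hj).symm))
  rw [abs_div, abs_prod, ← div_eq_mul_inv, div_div]
  exact div_le_div₀ hα (hf i) (by positivity) (hprod i)

theorem exists_eq_zero_of_hasDerivAt_of_eq_zero {a b : ℝ} {n : ℕ} (g : ℕ → ℝ → ℝ)
    (hg : ∀ k < n, ∀ t ∈ Ioo a b, HasDerivAt (g k) (g (k + 1) t) t)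
    (x : Fin (n + 1) → ℝ) (hx : StrictMono x) (hxab : ∀ i, x i ∈ Ioo a b)
    (hzero : ∀ i, g 0 (x i) = 0) : ∃ ξ ∈ Ioo a b, g n ξ = 0 := by
  induction n generalizing g with
  | zero => exact ⟨x 0, hxab 0, hzero 0⟩
  | succ n ih =>
    have hrolle : ∀ i : Fin (n + 1), ∃ y ∈ Ioo (x i.castSucc) (x i.succ), g 1 y = 0 := by
      intro i
      have hlt : x i.castSucc < x i.succ := hx i.castSucc_lt_succ
      have hsub : Icc (x i.castSucc) (x i.succ) ⊆ Ioo a b :=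
        Icc_subset_Ioo (hxab _).1 (hxab _).2
      exact exists_hasDerivAt_eq_zero hlt
        (fun t ht ↦ (hg 0 n.succ_pos t (hsub ht)).continuousAt.continuousWithinAt)
        ((hzero _).trans (hzero _).symm)
        (fun t ht ↦ hg 0 n.succ_pos t (hsub (Ioo_subset_Icc_self ht)))
    choose y hy hgy using hrolle
    have hy_mono : StrictMono y := fun i j hij ↦
      calc y i < x i.succ := (hy i).2
        _ ≤ x j.castSucc := hx.monotone (Fin.succ_le_castSucc_iff.mpr hij)
        _ < y j := (hy j).1
    exact ih (fun k ↦ g (k + 1)) (fun k hk ↦ hg (k + 1) (by omega)) y hy_mono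
      (fun i ↦ ⟨(hxab _).1.trans (hy i).1, (hy i).2.trans (hxab _).2⟩) hgy

theorem hasDerivAt_iteratedDerivWithin {f : ℝ → ℝ} {s : Set ℝ} (hs : IsOpen s) {k : ℕ}
    (hf : DifferentiableOn ℝ (iteratedDerivWithin k f s) s) {t : ℝ} (ht : t ∈ s) :
    HasDerivAt (iteratedDerivWithin k f s) (iteratedDerivWithin (k + 1) f s t) t := by
  rw [iteratedDerivWithin_succ, derivWithin_of_isOpen hs ht]
  exact (hf.differentiableAt (hs.mem_nhds ht)).hasDerivAt

theorem exists_iteratedDerivWithin_eq_factorial_mul_divDiff {a b : ℝ} {n : ℕ} {f : ℝ → ℝ}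
    (hf : ∀ k < n, DifferentiableOn ℝ (iteratedDerivWithin k f (Ioo a b)) (Ioo a b))
    {x : Fin (n + 1) → ℝ} (hx : StrictMono x) (hxab : ∀ i, x i ∈ Ioo a b) :
    ∃ ξ ∈ Ioo a b, iteratedDerivWithin n f (Ioo a b) ξ = n ! * divDiff x f := by
  set P := Lagrange.interpolate univ x (f ∘ x)
  have hPx : ∀ i, P.eval (x i) = f (x i) := fun i ↦
    Lagrange.eval_interpolate_at_node _ hx.injective.injOn (mem_univ i)
  have hPdeg : P.natDegree ≤ n := by
    have := Lagrange.degree_interpolate_le (s := univ) (f ∘ x) hx.injective.injOn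
    rw [card_univ, Fintype.card_fin, Nat.add_sub_cancel] at this
    exact natDegree_le_of_degree_le this
  obtain ⟨ξ, hξ, hξ0⟩ := exists_eq_zero_of_hasDerivAt_of_eq_zero
    (fun k t ↦ iteratedDerivWithin k f (Ioo a b) t - (derivative^[k] P).eval t)
    (fun k hk t ht ↦ (hasDerivAt_iteratedDerivWithin isOpen_Ioo (hf k hk) ht).sub <| by
      rw [Function.iterate_succ_apply']; exact Polynomial.hasDerivAt _ t)
    x hx hxab (fun i ↦ by simp [hPx])
  refine ⟨ξ, hξ, ?_⟩
  rw [sub_eq_zero.mp hξ0, eval_iterate_derivative_eq_factorial_mul_divDiff hx.injective hPdeg,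
    divDiff_congr x hPx]

end DividedDifference

section Chebyshev

open Finset

theorem prod_sub_eq_neg_one_pow_mul_prod_abs_sub {n : ℕ} {x : Fin (n + 1) → ℝ}
    (hx : StrictMono x) (i : Fin (n + 1)) :
    ∏ j ∈ univ.erase i, (x i - x j) = (-1) ^ (n - i : ℕ) * ∏ j ∈ univ.erase i, |x i - x j| := by
  have hsign : ∀ j ∈ univ.erase i, x i - x j = (if i < j then -1 else 1) * |x i - x j| := by
    intro j hj
    rcases (ne_of_mem_erase hj).lt_or_gt with hji | hij
    · simp [hji.not_gt, abs_of_pos (sub_pos.mpr (hx hji))]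
    · simp [hij, abs_of_neg (sub_neg.mpr (hx hij))]
  have hcard : #{j ∈ univ.erase i | i < j} = n - i := by
    rw [show {j ∈ univ.erase i | i < j} = Finset.Ioi i by ext j; simp; grind, Fin.card_Ioi]
    omega
  rw [prod_congr rfl hsign, prod_mul_distrib, prod_ite, prod_const, prod_const_one, mul_one, hcard]

noncomputable def shiftedChebyshevT (n : ℕ) : ℝ[X] := (Chebyshev.T ℝ n).comp (2 * X - 1)

noncomputable def chebyshevNode (n : ℕ) (i : Fin (n + 1)) : ℝ := (1 - cos (i * π / n)) / 2

theorem two_mul_X_sub_one_eq : (2 * X - 1 : ℝ[X]) = C 2 * X + C (-1) := by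
  rw [map_neg C, map_one, ← sub_eq_add_neg, map_ofNat]

theorem natDegree_shiftedChebyshevT (n : ℕ) : (shiftedChebyshevT n).natDegree = n := by
  rw [shiftedChebyshevT, natDegree_comp, two_mul_X_sub_one_eq, natDegree_linear two_ne_zero]
  simp

theorem leadingCoeff_shiftedChebyshevT (n : ℕ) :
    (shiftedChebyshevT n).leadingCoeff = 2 ^ (2 * n - 1) := by
  rw [shiftedChebyshevT, two_mul_X_sub_one_eq,
    leadingCoeff_comp (by rw [natDegree_linear two_ne_zero]; simp),
    leadingCoeff_linear two_ne_zero, Chebyshev.leadingCoeff_T, Chebyshev.natDegree_T,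
    Int.natAbs_natCast, ← pow_add]
  congr 1
  omega

theorem eval_shiftedChebyshevT_chebyshevNode (n : ℕ) (i : Fin (n + 1)) :
    (shiftedChebyshevT n).eval (chebyshevNode n i) = (-1) ^ (n - i : ℕ) := by
  rcases Nat.eq_zero_or_pos n with rfl | hn
  · simp [shiftedChebyshevT, Fin.fin_one_eq_zero i]
  have harg : 2 * chebyshevNode n i - 1 = cos (π - i * π / n) := by
    rw [chebyshevNode, cos_pi_sub]; ring
  have hmul : ((n : ℤ) : ℝ) * (π - i * π / n) = ((n - i : ℕ) : ℝ) * π - 0 := by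
    push_cast [Fin.is_le i]
    field_simp
    ring
  rw [shiftedChebyshevT, eval_comp]
  simp only [eval_sub, eval_mul, eval_ofNat, eval_X, eval_one]
  rw [harg, Chebyshev.T_real_cos, hmul, cos_nat_mul_pi_sub, cos_zero, mul_one]

theorem chebyshevNode_mem_Icc (n : ℕ) (i : Fin (n + 1)) : chebyshevNode n i ∈ Set.Icc 0 1 := by
  have := neg_one_le_cos (i * π / n)
  have := cos_le_one (i * π / n)
  constructor <;> unfold chebyshevNode <;> linarith

theorem chebyshevNode_strictMono (n : ℕ) : StrictMono (chebyshevNode n) := by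
  intro i j hij
  rcases Nat.eq_zero_or_pos n with rfl | hn
  · exact absurd hij (by simp [Fin.fin_one_eq_zero i, Fin.fin_one_eq_zero j])
  have hmem : ∀ k : Fin (n + 1), (k * π / n : ℝ) ∈ Set.Icc 0 π := fun k ↦
    ⟨by positivity, div_le_of_le_mul₀ (by positivity) pi_pos.le
      (by rw [mul_comm]; gcongr; exact_mod_cast Fin.is_le k)⟩
  have hlt : (i * π / n : ℝ) < j * π / n := by gcongr; exact_mod_cast hij
  have := strictAntiOn_cos (hmem i) (hmem j) hlt
  unfold chebyshevNode
  linarith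

theorem sum_inv_prod_abs_sub_chebyshevNode (n : ℕ) :
    ∑ i, (∏ j ∈ univ.erase i, |chebyshevNode n i - chebyshevNode n j|)⁻¹ = 2 ^ (2 * n - 1) := by
  have hc := chebyshevNode_strictMono n
  rw [← leadingCoeff_shiftedChebyshevT,
    ← divDiff_eval_eq_leadingCoeff hc.injective (natDegree_shiftedChebyshevT n)]
  refine sum_congr rfl fun i _ ↦ ?_
  dsimp only
  rw [eval_shiftedChebyshevT_chebyshevNode, prod_sub_eq_neg_one_pow_mul_prod_abs_sub hc,
    div_mul_cancel_left₀ (by simp)]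

end Chebyshev

section CumulativeVolume

noncomputable def cumulativeVolume (E : Set ℝ) (t : ℝ) : ℝ := volume.real (E ∩ Iio t)

variable {E : Set ℝ}

theorem cumulativeVolume_eq_add (hE : volume E ≠ ⊤) {u v : ℝ} (huv : u ≤ v) :
    cumulativeVolume E v = cumulativeVolume E u + volume.real (E ∩ Ico u v) := by
  have hfin : volume (E ∩ Iio v) ≠ ⊤ := measure_ne_top_of_subset inter_subset_left hE
  rw [cumulativeVolume, cumulativeVolume,
    ← measureReal_inter_add_sdiff (s := E ∩ Iio v) (measurableSet_Iio (a := u)) hfin]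
  congr 2
  · ext t; simp only [mem_inter_iff, mem_Iio]
    exact ⟨fun h ↦ ⟨h.1.1, h.2⟩, fun h ↦ ⟨⟨h.1, h.2.trans_le huv⟩, h.2⟩⟩
  · ext t; simp only [mem_sdiff, mem_inter_iff, mem_Iio, mem_Ico, not_lt]; tauto

theorem monotone_cumulativeVolume (hE : volume E ≠ ⊤) : Monotone (cumulativeVolume E) :=
  fun _ _ huv ↦ measureReal_mono (inter_subset_inter_right _ (Iio_subset_Iio huv))
    (measure_ne_top_of_subset inter_subset_left hE)

theorem cumulativeVolume_sub_le (hE : volume E ≠ ⊤) {u v : ℝ} (huv : u ≤ v) :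
    cumulativeVolume E v - cumulativeVolume E u ≤ v - u := by
  rw [cumulativeVolume_eq_add hE huv, add_sub_cancel_left, ← volume_real_Ico_of_le huv]
  exact measureReal_mono inter_subset_right measure_Ico_lt_top.ne

theorem lipschitzWith_cumulativeVolume (hE : volume E ≠ ⊤) :
    LipschitzWith 1 (cumulativeVolume E) := by
  refine LipschitzWith.of_le_add fun u v ↦ ?_
  rcases le_total u v with huv | hvu
  · linarith [monotone_cumulativeVolume hE huv, dist_nonneg (x := u) (y := v)]
  · linarith [cumulativeVolume_sub_le hE hvu, Real.dist_eq u v, le_abs_self (u - v)]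

theorem exists_mem_cumulativeVolume_mem_Icc {a b : ℝ} (hE : E ⊆ Ioo a b) {u v : ℝ}
    (hu : 0 ≤ u) (huv : u < v) (hv : v ≤ volume.real E) :
    ∃ x ∈ E, cumulativeVolume E x ∈ Icc u v := by
  have hfin : volume E ≠ ⊤ := measure_ne_top_of_subset hE measure_Ioo_lt_top.ne
  have hmono := monotone_cumulativeVolume hfin
  have hIVT := intermediate_value_univ a b (lipschitzWith_cumulativeVolume hfin).continuous
  have ha : cumulativeVolume E a = 0 := by
    rw [cumulativeVolume, show E ∩ Iio a = ∅ from
      eq_empty_of_forall_notMem fun t ht ↦ (hE ht.1).1.not_gt ht.2, measureReal_empty]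
  have hb : cumulativeVolume E b = volume.real E := by
    rw [cumulativeVolume, inter_eq_left.mpr fun t ht ↦ mem_Iio.mpr (hE ht).2]
  obtain ⟨y, hy⟩ := hIVT (show u ∈ Icc _ _ by rw [ha, hb]; exact ⟨hu, huv.le.trans hv⟩)
  obtain ⟨y', hy'⟩ := hIVT (show v ∈ Icc _ _ by rw [ha, hb]; exact ⟨hu.trans huv.le, hv⟩)
  have hyy' : y ≤ y' := by
    by_contra! h
    linarith [hmono h.le]
  have hpos : volume.real (E ∩ Ico y y') ≠ 0 := by
    linarith [cumulativeVolume_eq_add hfin hyy']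
  obtain ⟨x, hxE, hx⟩ := nonempty_of_measureReal_ne_zero hpos
  exact ⟨x, hxE, hy ▸ hmono hx.1, hy' ▸ hmono hx.2.le⟩

theorem exists_strictMono_mem_of_lt_volumeReal {a b : ℝ} (hE : E ⊆ Ioo a b) {n : ℕ}
    {c : Fin (n + 1) → ℝ} (hc : Monotone c) (hc01 : ∀ i, c i ∈ Icc 0 1) {m : ℝ} (hm0 : 0 ≤ m)
    (hm : m < volume.real E) :
    ∃ x : Fin (n + 1) → ℝ, StrictMono x ∧ (∀ i, x i ∈ E) ∧
      ∀ i j, m * |c i - c j| ≤ |x i - x j| := by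
  have hfin : volume E ≠ ⊤ := measure_ne_top_of_subset hE measure_Ioo_lt_top.ne
  set δ := (volume.real E - m) / (2 * n + 1)
  have hδ : 0 < δ := div_pos (sub_pos.2 hm) (by positivity)
  have hδE : m + (2 * n + 1) * δ = volume.real E := by
    simp only [δ]; field_simp; ring
  -- Windows of length `δ` separated by gaps `δ`, so that they stay apart even where `c` is
  -- constant; the last one ends at `volume.real E`.
  have hwindow : ∀ i : Fin (n + 1), ∃ y ∈ E,
      cumulativeVolume E y ∈ Icc (c i * m + 2 * i * δ) (c i * m + 2 * i * δ + δ) := by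
    intro i
    have hcm : c i * m ≤ m := mul_le_of_le_one_left hm0 (hc01 i).2
    have hin : (i : ℝ) ≤ n := by exact_mod_cast Fin.is_le i
    refine exists_mem_cumulativeVolume_mem_Icc hE ?_ (by linarith) (by nlinarith)
    have := (hc01 i).1
    positivity
  choose x hxE hxF using hwindow
  have hgap : ∀ i j, j < i → x j < x i ∧ m * (c i - c j) < x i - x j := by
    intro i j hji
    have hij : (j : ℝ) + 1 ≤ i := by exact_mod_cast hji
    have hcij : 0 ≤ m * (c i - c j) := mul_nonneg hm0 (sub_nonneg.2 (hc hji.le))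
    have hF : m * (c i - c j) < cumulativeVolume E (x i) - cumulativeVolume E (x j) := by
      nlinarith [(hxF i).1, (hxF j).2]
    have hlt : x j < x i := lt_of_not_ge fun h ↦ by
      linarith [monotone_cumulativeVolume hfin h]
    exact ⟨hlt, hF.trans_le (cumulativeVolume_sub_le hfin hlt.le)⟩
  refine ⟨x, fun j i h ↦ (hgap i j h).1, hxE, fun i j ↦ ?_⟩
  rcases lt_trichotomy i j with h | rfl | h
  · rw [abs_sub_comm (c i), abs_sub_comm (x i), abs_of_nonneg (sub_nonneg.2 (hc h.le)),
      abs_of_pos (sub_pos.2 (hgap j i h).1)]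
    exact (hgap j i h).2.le
  · simp
  · rw [abs_of_nonneg (sub_nonneg.2 (hc h.le)), abs_of_pos (sub_pos.2 (hgap i j h).1)]
    exact (hgap i j h).2.le

end CumulativeVolume

theorem sublevel_set_estimate (a b lam α : ℝ) (n : ℕ) (hn : 1 ≤ n) (f : ℝ → ℝ)
    (hd : ∀ k < n, DifferentiableOn ℝ (iteratedDerivWithin k f (Set.Ioo a b)) (Set.Ioo a b))
    (hlam : 0 < lam) (hα : 0 ≤ α)
    (hf : ∀ x ∈ Set.Ioo a b, lam ≤ |iteratedDerivWithin n f (Set.Ioo a b) x|) :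
    (MeasureTheory.volume {x ∈ Set.Ioo a b | |f x| ≤ α}).toReal ≤
      ((n.factorial : ℝ) * 2 ^ (2 * n - 1)) ^ ((1 : ℝ) / n) * (α / lam) ^ ((1 : ℝ) / n) := by
  refine le_of_forall_lt_imp_le_of_dense fun m hm ↦ ?_
  rcases le_or_gt m 0 with hm0 | hm0
  · exact hm0.trans (by positivity)
  have hc := chebyshevNode_strictMono n
  obtain ⟨x, hx, hxE, hxc⟩ := exists_strictMono_mem_of_lt_volumeReal (sep_subset _ _)
    hc.monotone (chebyshevNode_mem_Icc n) hm0.le hm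
  obtain ⟨ξ, hξ, hξx⟩ :=
    exists_iteratedDerivWithin_eq_factorial_mul_divDiff hd hx fun i ↦ (hxE i).1
  have hdivDiff := abs_divDiff_le hc.injective hm0 (fun i ↦ (hxE i).2) hxc
  rw [sum_inv_prod_abs_sub_chebyshevNode] at hdivDiff
  have hlam_le : lam ≤ n ! * (α / m ^ n * 2 ^ (2 * n - 1)) :=
    calc lam ≤ |iteratedDerivWithin n f (Set.Ioo a b) ξ| := hf ξ hξ
      _ = n ! * |divDiff x f| := by rw [hξx, abs_mul, Nat.abs_cast]
      _ ≤ _ := by gcongr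
  rw [← mul_rpow (by positivity) (by positivity), one_div,
    le_rpow_inv_iff_of_pos hm0.le (by positivity) (by positivity), rpow_natCast,
    mul_div_assoc', le_div_iff₀ hlam]
  rw [div_mul_eq_mul_div, mul_div_assoc', le_div_iff₀ (by positivity)] at hlam_le
  linarith
end

section
/- Let ηⱼ = cos(jπ/n) for j = 0,...,n be the Chebyshev extrema, for n ≥ 1. Then ∑_{j=0}^{n} ∏_{k ≠ j} |ηₖ - ηⱼ|^(-1) = 2^(n-1). -/
/-!
Since the nodes ηⱼ decrease in j, `∏_{k ≠ j} |ηₖ - ηⱼ| = (-1)^j ∏_{k ≠ j} (ηⱼ - ηₖ)`, and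
`(-1)^j = Tₙ(ηⱼ)`. The sum is therefore the Lagrange formula `∑ⱼ p(ηⱼ) / ∏_{k ≠ j} (ηⱼ - ηₖ)`
for the leading coefficient of the degree-`n` polynomial `p = Tₙ`, which is `2^(n-1)`.
-/

open Finset Polynomial Real

theorem Fin.prod_abs_sub_of_strictAnti {R : Type*} [CommRing R] [LinearOrder R]
    [IsStrictOrderedRing R] {m : ℕ} {x : Fin m → R} (hx : StrictAnti x) (j : Fin m) :
    ∏ k ∈ univ.erase j, |x k - x j| = (-1) ^ (j : ℕ) * ∏ k ∈ univ.erase j, (x j - x k) := by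
  have hsign : ∀ k ∈ univ.erase j, |x k - x j| = (if k < j then -1 else 1) * (x j - x k) := by
    intro k hk
    rcases lt_or_gt_of_ne (ne_of_mem_erase hk) with hkj | hjk
    · rw [if_pos hkj, abs_of_pos (sub_pos.2 (hx hkj))]
      ring
    · rw [if_neg hjk.not_gt, abs_of_neg (sub_neg.2 (hx hjk)), one_mul, neg_sub]
  have hbelow : (univ.erase j).filter (· < j) = Iio j := by
    ext k
    simp only [mem_filter, mem_erase, mem_univ, mem_Iio]
    exact ⟨fun h => h.2, fun h => ⟨⟨h.ne, trivial⟩, h⟩⟩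
  rw [prod_congr rfl hsign, prod_mul_distrib, prod_ite, prod_const_one, mul_one, hbelow,
    Finset.prod_const, Fin.card_Iio]

theorem strictAnti_cos_nat_mul_pi_div (n : ℕ) :
    StrictAnti fun k : Fin (n + 1) => cos ((k : ℕ) * π / n) := by
  intro a b hab
  have hab' : (a : ℝ) < b := by exact_mod_cast hab
  have hb : (b : ℝ) ≤ n := by exact_mod_cast Nat.lt_succ_iff.1 b.isLt
  have hn : (0 : ℝ) < n := by linarith [(a : ℕ).cast_nonneg (α := ℝ)]
  have hmem : ∀ k : Fin (n + 1), (k : ℝ) ≤ n → (k : ℕ) * π / n ∈ Set.Icc 0 π := fun k hk =>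
    ⟨by positivity, by rw [div_le_iff₀ hn]; nlinarith [pi_pos]⟩
  exact strictAntiOn_cos (hmem a (hab'.le.trans hb)) (hmem b hb) (by gcongr)

theorem Polynomial.Chebyshev.T_eval_cos_nat_mul_pi_div {n k : ℕ} (hk : k ≤ n) :
    (Chebyshev.T ℝ n).eval (cos (k * π / n)) = (-1) ^ k := by
  obtain rfl | hn := eq_or_ne n 0
  · simp [Nat.le_zero.1 hk]
  rw [Chebyshev.T_real_cos, ← cos_nat_mul_pi]
  congr 1
  field_simp
  push_cast
  ring

theorem chebyshev_extrema_sum_general (n : ℕ) :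
    ∑ j : Fin (n + 1), ∏ k ∈ Finset.univ.erase j,
      |Real.cos ((k : ℕ) * Real.pi / n) - Real.cos ((j : ℕ) * Real.pi / n)|⁻¹
      = 2 ^ (n - 1) := by
  set η : Fin (n + 1) → ℝ := fun k => cos ((k : ℕ) * π / n)
  have hη : StrictAnti η := strictAnti_cos_nat_mul_pi_div n
  have hdeg : #(univ : Finset (Fin (n + 1))) = (Chebyshev.T ℝ n).degree + 1 := by
    rw [Chebyshev.degree_T, card_univ, Fintype.card_fin]
    norm_cast
  calc ∑ j, ∏ k ∈ univ.erase j, |η k - η j|⁻¹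
      = ∑ j, (Chebyshev.T ℝ n).eval (η j) / ∏ k ∈ univ.erase j, (η j - η k) := by
        refine sum_congr rfl fun j _ => ?_
        rw [prod_inv_distrib, Fin.prod_abs_sub_of_strictAnti hη,
          Chebyshev.T_eval_cos_nat_mul_pi_div (Nat.lt_succ_iff.1 j.isLt), mul_inv,
          div_eq_mul_inv, ← inv_pow, inv_neg, inv_one]
    _ = (Chebyshev.T ℝ n).leadingCoeff :=
        (Lagrange.leadingCoeff_eq_sum hη.injective.injOn hdeg).symm
    _ = 2 ^ (n - 1) := by rw [Chebyshev.leadingCoeff_T]; rfl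

theorem chebyshev_extrema_sum (n : ℕ) (hn : 1 ≤ n) :
    ∑ j : Fin (n + 1), ∏ k ∈ Finset.univ.erase j,
      |Real.cos ((k : ℕ) * Real.pi / n) - Real.cos ((j : ℕ) * Real.pi / n)|⁻¹
      = 2 ^ (n - 1) :=
  chebyshev_extrema_sum_general n
end

section
/- Let n ≥ 1 and let x₀ < x₁ < ... < xₙ be points in [-1,1] such that the n-th divided difference satisfies f[x₀,...,xₙ] ≤ 2^(n-1) ‖f‖_∞ for every continuous f : [-1,1] → ℝ. Then the points xⱼ are exactly the Chebyshev extrema, i.e., xⱼ = cos((n-j)π/n) for j = 0,...,n. -/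
/-!
Testing the hypothesis on a continuous function of sup norm `1` that takes the value `(-1)^(j+n)`
at `x j` shows that the weights `∏_{k ≠ j} |x k - x j|⁻¹` sum to at most `2^(n-1)`. On the other
hand, the divided difference of the Chebyshev polynomial `T n` is its leading coefficient
`2^(n-1)`, while `|T n| ≤ 1` on `[-1, 1]`. So all the resulting inequalities are equalities, which
forces `|T n (x j)| = 1` at every node: each `x j` is one of the `n + 1` extrema `cos (k π / n)`,
and an increasing family of `n + 1` of them must be all of them, in order.
-/

open Finset Polynomial Polynomial.Chebyshev

lemma Fin.eq_rev_of_strictAnti {n : ℕ} {f : Fin n → Fin n} (hf : StrictAnti f) : f = Fin.rev := by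
  have hid : Fin.rev ∘ f = id := StrictMono.eq_id (Fin.rev_strictAnti.comp hf)
  funext j
  simpa using congrArg Fin.rev (congrFun hid j)

lemma prod_erase_sub_of_strictMono {R : Type*} [CommRing R] [LinearOrder R] [IsOrderedRing R]
    {n : ℕ} {x : Fin (n + 1) → R} (hx : StrictMono x) (j : Fin (n + 1)) :
    ∏ k ∈ univ.erase j, (x j - x k) = (-1) ^ (n - j) * ∏ k ∈ univ.erase j, |x k - x j| := by
  have hsign : ∀ k ∈ univ.erase j, x j - x k = (if j < k then -1 else 1) * |x k - x j| := by
    intro k hk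
    rcases lt_or_gt_of_ne (ne_of_mem_erase hk) with hkj | hjk
    · rw [if_neg hkj.not_gt, one_mul, abs_of_neg (sub_neg.mpr (hx hkj)), neg_sub]
    · rw [if_pos hjk, abs_of_pos (sub_pos.mpr (hx hjk)), neg_one_mul, neg_sub]
  have hIoi : (univ.erase j).filter (j < ·) = Ioi j := by ext k; simpa using ne_of_gt
  rw [prod_congr rfl hsign, prod_mul_distrib, prod_ite, prod_const, prod_const_one, mul_one,
    hIoi, Fin.card_Ioi, Nat.add_sub_cancel]

noncomputable def nodeWeight {n : ℕ} (x : Fin (n + 1) → ℝ) (j : Fin (n + 1)) : ℝ :=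
  ∏ k ∈ univ.erase j, |x k - x j|⁻¹

noncomputable def dividedDifference {n : ℕ} (x : Fin (n + 1) → ℝ) (f : ℝ → ℝ) : ℝ :=
  ∑ j : Fin (n + 1), (-1 : ℝ) ^ ((j : ℕ) + n) * nodeWeight x j * f (x j)

lemma nodeWeight_pos {n : ℕ} {x : Fin (n + 1) → ℝ} (hx : Function.Injective x) (j : Fin (n + 1)) :
    0 < nodeWeight x j :=
  prod_pos fun _ hk => inv_pos.mpr (abs_pos.mpr (sub_ne_zero.mpr (hx.ne (ne_of_mem_erase hk))))

lemma dividedDifference_eval_eq_coeff {n : ℕ} {x : Fin (n + 1) → ℝ} (hx : StrictMono x)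
    {p : ℝ[X]} (hp : p.degree ≤ n) : dividedDifference x p.eval = p.coeff n := by
  have hp' : p.degree < #(univ : Finset (Fin (n + 1))) := by
    rw [card_univ, Fintype.card_fin]
    exact hp.trans_lt (WithBot.coe_lt_coe.mpr n.lt_succ_self)
  have hcoeff := Lagrange.coeff_eq_sum hx.injective.injOn hp'
  rw [card_univ, Fintype.card_fin, Nat.add_sub_cancel] at hcoeff
  rw [hcoeff, dividedDifference]
  unfold nodeWeight
  refine sum_congr rfl fun j _ => ?_
  have hpow : (-1 : ℝ) ^ ((j : ℕ) + n) = (-1) ^ (n - j) := by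
    rw [show (j : ℕ) + n = n - j + 2 * j by omega, pow_add, pow_mul, neg_one_sq, one_pow, mul_one]
  rw [prod_erase_sub_of_strictMono hx, hpow, div_eq_mul_inv, mul_inv, ← inv_pow, inv_neg, inv_one,
    ← prod_inv_distrib]
  ring

lemma exists_continuousMap_abs_le_one_eq {ι : Type*} [Fintype ι] {x : ι → ℝ}
    (hx : Function.Injective x) {v : ι → ℝ} (hv : ∀ j, |v j| ≤ 1) :
    ∃ g : C(ℝ, ℝ), (∀ t, |g t| ≤ 1) ∧ ∀ j, g (x j) = v j := by
  classical
  set p := Lagrange.interpolate univ x v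
  refine ⟨⟨fun t => max (-1) (min 1 (p.eval t)), by fun_prop⟩, fun t => ?_, fun j => ?_⟩
  · exact abs_le.mpr ⟨le_max_left _ _, max_le (by norm_num) (min_le_left _ _)⟩
  · have hpj : p.eval (x j) = v j :=
      Lagrange.eval_interpolate_at_node v hx.injOn (mem_univ j)
    obtain ⟨hlo, hhi⟩ := abs_le.mp (hv j)
    simp [hpj, hlo, hhi]

lemma sum_nodeWeight_le {n : ℕ} {x : Fin (n + 1) → ℝ} (hx : Function.Injective x) {C : ℝ}
    (h : ∀ g : C(ℝ, ℝ), (∀ t, |g t| ≤ 1) → dividedDifference x g ≤ C) :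
    ∑ j, nodeWeight x j ≤ C := by
  obtain ⟨g, hg, hgx⟩ := exists_continuousMap_abs_le_one_eq hx
    (v := fun j : Fin (n + 1) => (-1) ^ ((j : ℕ) + n)) (fun j => by simp)
  refine le_of_eq_of_le (sum_congr rfl fun j _ => ?_) (h g hg)
  rw [hgx, mul_right_comm, ← pow_add, ← two_mul, pow_mul, neg_one_sq, one_pow, one_mul]

lemma abs_eval_T_eq_one_of_sum_nodeWeight_le {n : ℕ} {x : Fin (n + 1) → ℝ} (hx : StrictMono x)
    (hmem : ∀ j, |x j| ≤ 1) (hsum : ∑ j, nodeWeight x j ≤ 2 ^ (n - 1)) (j : Fin (n + 1)) :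
    |(T ℝ n).eval (x j)| = 1 := by
  have hT : dividedDifference x (T ℝ n).eval = 2 ^ (n - 1) := by
    rw [dividedDifference_eval_eq_coeff hx (by simp)]
    simpa using (T ℝ n).coeff_natDegree
  have hw := nodeWeight_pos hx.injective
  have hpt : ∀ i ∈ univ, nodeWeight x i * |(T ℝ n).eval (x i)| ≤ nodeWeight x i :=
    fun i _ => mul_le_of_le_one_right (hw i).le (abs_eval_T_real_le_one n (hmem i))
  have hge : ∑ j, nodeWeight x j ≤ ∑ j, nodeWeight x j * |(T ℝ n).eval (x j)| := by
    refine hsum.trans (hT ▸ sum_le_sum fun j _ => (le_abs_self _).trans_eq ?_)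
    rw [abs_mul, abs_mul, abs_pow, abs_neg, abs_one, one_pow, one_mul, abs_of_pos (hw j)]
  have heq := (sum_eq_sum_iff_of_le hpt).mp (le_antisymm (sum_le_sum hpt) hge) j (mem_univ j)
  exact (mul_eq_left₀ (hw j).ne').mp heq

lemma eq_node_sub_of_abs_eval_T_eq_one {n : ℕ} (hn : n ≠ 0) {x : Fin (n + 1) → ℝ}
    (hx : StrictMono x) (hT : ∀ j, |(T ℝ n).eval (x j)| = 1) (j : Fin (n + 1)) :
    x j = node n (n - j) := by
  choose k hkn hxk using fun j => (abs_eval_T_real_eq_one_iff hn (x j)).mp (hT j)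
  let k' : Fin (n + 1) → Fin (n + 1) := fun j => ⟨k j, Nat.lt_succ_of_le (hkn j)⟩
  have hk_mem : ∀ j, k j ∈ (range (n + 1) : Set ℕ) := fun j => by
    simpa using Nat.lt_succ_of_le (hkn j)
  have hanti : StrictAnti k' := fun a b hab => by
    have hlt := hx hab
    rw [hxk a, hxk b] at hlt
    exact ((strictAntiOn_node n).lt_iff_gt (hk_mem a) (hk_mem b)).mp hlt
  have hk : (k' j : ℕ) = n - j := by
    rw [Fin.eq_rev_of_strictAnti hanti, Fin.val_rev]
    omega
  rw [hxk j, ← hk]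
  rfl

theorem divided_difference_minimal_nodes_unique (n : ℕ) (hn : 1 ≤ n)
    (x : Fin (n + 1) → ℝ) (hx : StrictMono x) (hmem : ∀ j, x j ∈ Set.Icc (-1 : ℝ) 1)
    (h : ∀ f : C(Set.Icc (-1 : ℝ) 1, ℝ),
      ∑ j : Fin (n + 1), (-1 : ℝ) ^ ((j : ℕ) + n) *
        (∏ k ∈ Finset.univ.erase j, |x k - x j|⁻¹) * f ⟨x j, hmem j⟩ ≤ 2 ^ (n - 1) * ‖f‖) :
    ∀ j : Fin (n + 1), x j = Real.cos (((n - (j : ℕ) : ℕ) : ℝ) * Real.pi / n) := by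
  have hdd : ∀ g : C(ℝ, ℝ), (∀ t, |g t| ≤ 1) → dividedDifference x g ≤ 2 ^ (n - 1) :=
    fun g hg => (h (g.restrict _)).trans <| mul_le_of_le_one_right (by positivity) <|
      (ContinuousMap.norm_le _ zero_le_one).mpr fun t => hg t
  have hT := abs_eval_T_eq_one_of_sum_nodeWeight_le hx (fun j => abs_le.mpr (hmem j))
    (sum_nodeWeight_le hx.injective hdd)
  exact eq_node_sub_of_abs_eval_T_eq_one (by omega) hx hT
end

section
/- Let n ≥ 1 and let x₀ < ... < xₙ be any points in [-1,1]. Then ∑_{j=0}^{n} ∏_{k ≠ j} |xₖ - xⱼ|^(-1) ≥ 2^(n-1), with equality if and only if the xⱼ are the Chebyshev extrema cos((n-j)π/n). -/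
open Polynomial Finset

private lemma cheb_deg_coeff : ∀ n : ℕ, (Chebyshev.T ℝ n).natDegree ≤ n ∧
    (Chebyshev.T ℝ n).coeff n = 2 ^ (n - 1) := by
  intro n
  induction n using Nat.twoStepInduction with
  | zero => simp [Chebyshev.T_zero]
  | one => simp [Chebyshev.T_one]
  | more n ih1 ih2 =>
    have hrec : Chebyshev.T ℝ ((n:ℤ) + 2) = 2 * X * Chebyshev.T ℝ ((n:ℤ) + 1) - Chebyshev.T ℝ n :=
      Chebyshev.T_add_two ℝ n
    have hcast1 : ((n + 1 : ℕ) : ℤ) = (n : ℤ) + 1 := by push_cast; ring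
    rw [← hcast1] at hrec
    rw [show ((n+2:ℕ):ℤ) = (n:ℤ)+2 from by push_cast; ring]
    have h2 := ih2
    rw [hrec]
    have hX : (2 * X : ℝ[X]).natDegree ≤ 1 :=
      le_trans natDegree_mul_le (by simp)
    have hmul : ((2 * X : ℝ[X]) * Chebyshev.T ℝ ((n+1:ℕ):ℤ)).natDegree ≤ n + 2 := by
      refine le_trans natDegree_mul_le ?_
      have := h2.1; omega
    constructor
    · refine le_trans (natDegree_sub_le _ _) (max_le hmul (le_trans ih1.1 (by omega)))
    · rw [coeff_sub, coeff_eq_zero_of_natDegree_lt (lt_of_le_of_lt ih1.1 (by omega)), sub_zero]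
      have h3 : (2 * X * Chebyshev.T ℝ ((n+1:ℕ):ℤ)) = 2 * (X * Chebyshev.T ℝ ((n+1:ℕ):ℤ)) := by
        ring
      rw [h3]
      have h2c : (2 * (X * Chebyshev.T ℝ ((n+1:ℕ):ℤ))).coeff (n+2)
          = 2 * (X * Chebyshev.T ℝ ((n+1:ℕ):ℤ)).coeff (n+2) := by
        simpa using coeff_smul (2:ℝ) (X * Chebyshev.T ℝ ((n+1:ℕ):ℤ)) (n+2)
      rw [h2c, coeff_X_mul, h2.2]
      simp
      ring

private lemma cheb_abs_le (n : ℤ) {y : ℝ} (hy : y ∈ Set.Icc (-1:ℝ) 1) :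
    |(Chebyshev.T ℝ n).eval y| ≤ 1 := by
  obtain ⟨h1, h2⟩ := hy
  rw [← Real.cos_arccos h1 h2, Chebyshev.T_real_cos]
  exact Real.abs_cos_le_one _

private lemma coeff_top_eq (n : ℕ) (v : Fin (n+1) → ℝ) (hv : Function.Injective v)
    (p : ℝ[X]) (hp : p.natDegree ≤ n) :
    p.coeff n = ∑ j : Fin (n+1), p.eval (v j) * ∏ k ∈ univ.erase j, (v j - v k)⁻¹ := by
  have hinj : Set.InjOn v (univ : Finset (Fin (n+1))) := hv.injOn
  have hdeg : p.degree < (univ : Finset (Fin (n+1))).card := by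
    rw [card_univ, Fintype.card_fin]
    exact lt_of_le_of_lt degree_le_natDegree (by exact_mod_cast Nat.lt_succ_of_le hp)
  have hP := Lagrange.eq_interpolate hinj hdeg
  conv_lhs => rw [hP]
  rw [Lagrange.interpolate_apply, finset_sum_coeff]
  refine Finset.sum_congr rfl fun j _ => ?_
  have hb : Lagrange.basis univ v j
      = C (Lagrange.nodalWeight univ v j) * Lagrange.nodal (univ.erase j) v := by
    rw [Lagrange.basis_eq_prod_sub_inv_mul_nodal_div (mem_univ j),
      ← Lagrange.nodal_erase_eq_nodal_div (mem_univ j)]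
  rw [hb, coeff_C_mul, coeff_C_mul]
  have hdn : (Lagrange.nodal (univ.erase j) v).natDegree = n := by
    rw [Lagrange.natDegree_nodal, card_erase_of_mem (mem_univ j), card_univ, Fintype.card_fin]
    omega
  have hone : (Lagrange.nodal (univ.erase j) v).coeff n = 1 := by
    have hm := Lagrange.nodal_monic (s := univ.erase j) (v := v)
    have h1 := hm.coeff_natDegree
    rwa [hdn] at h1
  rw [hone, Lagrange.nodalWeight]
  ring

private lemma sign_prod (n : ℕ) (x : Fin (n+1) → ℝ) (hx : StrictMono x) (j : Fin (n+1)) :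
    ∏ k ∈ univ.erase j, (x j - x k)⁻¹
      = (-1 : ℝ) ^ (n - (j:ℕ)) * ∏ k ∈ univ.erase j, |x k - x j|⁻¹ := by
  have hsplit : univ.erase j = Finset.Iio j ∪ Finset.Ioi j := by
    ext k; simp [Finset.mem_erase]
    try omega
  have hdisj : Disjoint (Finset.Iio j) (Finset.Ioi j) := by
    simp [Finset.disjoint_left]
    try omega
  rw [hsplit, prod_union hdisj, prod_union hdisj]
  have hIio : ∀ k ∈ Finset.Iio j, (x j - x k)⁻¹ = |x k - x j|⁻¹ := by
    intro k hk
    rw [Finset.mem_Iio] at hk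
    rw [abs_of_neg (by linarith [hx hk] : x k - x j < 0)]
    ring_nf
  have hIoi : ∀ k ∈ Finset.Ioi j, (x j - x k)⁻¹ = -|x k - x j|⁻¹ := by
    intro k hk
    rw [Finset.mem_Ioi] at hk
    rw [abs_of_pos (by linarith [hx hk] : 0 < x k - x j)]
    rw [← inv_neg]; ring_nf
  rw [prod_congr rfl hIio, prod_congr rfl hIoi]
  have hneg : ∏ k ∈ Finset.Ioi j, (-|x k - x j|⁻¹)
      = (-1:ℝ)^(Finset.Ioi j).card * ∏ k ∈ Finset.Ioi j, |x k - x j|⁻¹ := by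
    rw [← Finset.prod_const, ← Finset.prod_mul_distrib]
    exact Finset.prod_congr rfl fun k _ => by ring
  rw [hneg, Fin.card_Ioi]
  have hc : n + 1 - 1 - (j:ℕ) = n - (j:ℕ) := by omega
  rw [hc]; ring

private lemma strictAnti_gap (n : ℕ) (m : Fin (n+1) → ℤ) (hm : StrictAnti m) :
    ∀ d : ℕ, ∀ i j : Fin (n+1), (j:ℕ) = (i:ℕ) + d → m j + d ≤ m i := by
  intro d
  induction d with
  | zero =>
    intro i j hij
    have : i = j := Fin.ext (by omega)
    simp [this]
  | succ d ih =>
    intro i j hij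
    have hd : (i:ℕ) + d < n + 1 := by omega
    set j' : Fin (n+1) := ⟨(i:ℕ) + d, hd⟩ with hj'
    have h1 : m j' + d ≤ m i := ih i j' rfl
    have h2 : m j < m j' := hm (by rw [Fin.lt_def]; simp [hj']; omega)
    push_cast
    omega

private lemma strictAnti_fin_int (n : ℕ) (m : Fin (n+1) → ℤ) (hm : StrictAnti m)
    (h0 : ∀ j, 0 ≤ m j) (h1 : ∀ j, m j ≤ n) : ∀ j, m j = (n:ℤ) - (j:ℕ) := by
  intro j
  have hj : (j:ℕ) ≤ n := by omega
  have hub : m j + (j:ℕ) ≤ m 0 := strictAnti_gap n m hm (j:ℕ) 0 j (by simp)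
  have hlast : ((⟨n, by omega⟩ : Fin (n+1)) : ℕ) = (j:ℕ) + (n - (j:ℕ)) := by simp; omega
  have hlb : m ⟨n, by omega⟩ + ((n:ℕ) - (j:ℕ) : ℕ) ≤ m j :=
    strictAnti_gap n m hm (n - (j:ℕ)) j ⟨n, by omega⟩ hlast
  have e1 := h1 0
  have e2 := h0 ⟨n, by omega⟩
  have : (((n:ℕ) - (j:ℕ) : ℕ) : ℤ) = (n:ℤ) - (j:ℕ) := by push_cast [hj]; ring
  omega

theorem divided_difference_weights_lower_bound (n : ℕ) (hn : 1 ≤ n)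
    (x : Fin (n + 1) → ℝ) (hx : StrictMono x) (hmem : ∀ j, x j ∈ Set.Icc (-1 : ℝ) 1) :
    (2 : ℝ) ^ (n - 1) ≤ ∑ j : Fin (n + 1), ∏ k ∈ Finset.univ.erase j, |x k - x j|⁻¹ ∧
    ((∑ j : Fin (n + 1), ∏ k ∈ Finset.univ.erase j, |x k - x j|⁻¹) = 2 ^ (n - 1) ↔
      ∀ j : Fin (n + 1), x j = Real.cos (((n - (j : ℕ) : ℕ) : ℝ) * Real.pi / n)) := by
  classical
  have hnR : (0:ℝ) < n := by exact_mod_cast hn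
  set a : Fin (n+1) → ℝ := fun j => ∏ k ∈ univ.erase j, |x k - x j|⁻¹ with ha
  set t : Fin (n+1) → ℝ := fun j => (Chebyshev.T ℝ (n:ℤ)).eval (x j) with ht
  have hapos : ∀ j, 0 < a j := by
    intro j
    refine Finset.prod_pos fun k hk => ?_
    have hkj : k ≠ j := (Finset.mem_erase.mp hk).1
    have hne : x k - x j ≠ 0 := sub_ne_zero.mpr (fun h => hkj (hx.injective h))
    positivity
  have htle : ∀ j, |t j| ≤ 1 := fun j => cheb_abs_le _ (hmem j)
  -- key identity
  have hkey : (2:ℝ) ^ (n-1) = ∑ j : Fin (n+1), t j * ((-1:ℝ)^(n - (j:ℕ)) * a j) := by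
    have h1 := coeff_top_eq n x hx.injective (Chebyshev.T ℝ (n:ℤ)) (cheb_deg_coeff n).1
    rw [(cheb_deg_coeff n).2] at h1
    rw [h1]
    exact Finset.sum_congr rfl fun j _ => by rw [sign_prod n x hx j]
  -- each summand of the defect is nonneg
  have hterm : ∀ j : Fin (n+1), t j * ((-1:ℝ)^(n - (j:ℕ)) * a j) ≤ a j := by
    intro j
    have h1 : t j * ((-1:ℝ)^(n - (j:ℕ)) * a j) ≤ |t j * ((-1:ℝ)^(n - (j:ℕ)) * a j)| :=
      le_abs_self _
    have h2 : |t j * ((-1:ℝ)^(n - (j:ℕ)) * a j)| = |t j| * a j := by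
      rw [abs_mul, abs_mul, abs_pow, abs_neg, abs_one, one_pow, one_mul,
        abs_of_pos (hapos j)]
    nlinarith [htle j, hapos j]
  have hle : (2:ℝ) ^ (n-1) ≤ ∑ j : Fin (n+1), a j := by
    rw [hkey]
    exact Finset.sum_le_sum fun j _ => hterm j
  refine ⟨hle, ?_⟩
  -- equality ↔ all t j = (-1)^(n-j)
  have hstep1 : (∑ j : Fin (n+1), a j) = 2 ^ (n-1) ↔
      ∀ j : Fin (n+1), t j = (-1:ℝ)^(n - (j:ℕ)) := by
    constructor
    · intro hEq
      have hz : ∑ j : Fin (n+1), (a j - t j * ((-1:ℝ)^(n - (j:ℕ)) * a j)) = 0 := by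
        rw [Finset.sum_sub_distrib, ← hkey, hEq, sub_self]
      have hall := (Finset.sum_eq_zero_iff_of_nonneg
        (fun j _ => by linarith [hterm j])).mp hz
      intro j
      have hj := hall j (mem_univ j)
      have h2 : t j * (-1:ℝ)^(n - (j:ℕ)) = 1 := by
        have := hapos j
        have h3 : a j * (1 - t j * (-1:ℝ)^(n - (j:ℕ))) = 0 := by ring_nf; ring_nf at hj; linarith
        have h4 := mul_eq_zero.mp h3
        rcases h4 with h | h
        · linarith
        · linarith
      have hsq : ((-1:ℝ)^(n - (j:ℕ)))^2 = 1 := by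
        rw [← pow_mul, mul_comm, pow_mul]; simp
      calc t j = t j * (-1:ℝ)^(n - (j:ℕ)) * (-1:ℝ)^(n - (j:ℕ)) := by
                  rw [mul_assoc, ← sq, hsq, mul_one]
        _ = (-1:ℝ)^(n - (j:ℕ)) := by rw [h2, one_mul]
    · intro hT
      rw [hkey]
      refine Finset.sum_congr rfl fun j _ => ?_
      rw [hT j, ← mul_assoc, ← sq, ← pow_mul, mul_comm (n - (j:ℕ)) 2, pow_mul]
      simp
  rw [hstep1]
  -- now the trig characterization
  constructor
  · -- forward: t j = (-1)^(n-j) forces Chebyshev extrema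
    intro hT j
    set θ : Fin (n+1) → ℝ := fun i => Real.arccos (x i) with hθ
    have hθmem : ∀ i, θ i ∈ Set.Icc 0 Real.pi := fun i =>
      ⟨Real.arccos_nonneg _, Real.arccos_le_pi _⟩
    have hxθ : ∀ i, x i = Real.cos (θ i) := fun i =>
      (Real.cos_arccos (hmem i).1 (hmem i).2).symm
    have hcosn : ∀ i, Real.cos ((n:ℝ) * θ i) = (-1:ℝ)^(n - (i:ℕ)) := by
      intro i
      have h2 : (Chebyshev.T ℝ (n:ℤ)).eval (Real.cos (θ i)) = (-1:ℝ)^(n-(i:ℕ)) := by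
        rw [← hxθ i]; exact hT i
      rw [Chebyshev.T_real_cos] at h2
      exact_mod_cast h2
    have hsin : ∀ i, Real.sin ((n:ℝ) * θ i) = 0 := by
      intro i
      have h1 : Real.sin ((n:ℝ) * θ i)^2 = 1 - Real.cos ((n:ℝ) * θ i)^2 := by
        nlinarith [Real.sin_sq_add_cos_sq ((n:ℝ) * θ i)]
      have h2 : Real.cos ((n:ℝ) * θ i)^2 = 1 := by
        rw [hcosn i, ← pow_mul, mul_comm (n - (i:ℕ)) 2, pow_mul]; simp
      nlinarith
    choose m hm using fun i => Real.sin_eq_zero_iff.mp (hsin i)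
    -- bounds on m
    have hmlb : ∀ i, 0 ≤ m i := by
      intro i
      have := hm i
      have h1 : (0:ℝ) ≤ (m i : ℝ) * Real.pi := by
        rw [this]; exact mul_nonneg (le_of_lt hnR) (hθmem i).1
      by_contra hneg
      push_neg at hneg
      have : (m i : ℝ) < 0 := by exact_mod_cast hneg
      nlinarith [Real.pi_pos]
    have hmub : ∀ i, m i ≤ n := by
      intro i
      have heq := hm i
      have h1 : (m i : ℝ) * Real.pi ≤ (n:ℝ) * Real.pi := by
        rw [heq]
        exact mul_le_mul_of_nonneg_left (hθmem i).2 (le_of_lt hnR)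
      have : (m i : ℝ) ≤ (n:ℝ) := le_of_mul_le_mul_right h1 Real.pi_pos
      exact_mod_cast this
    -- θ strictly antitone, hence m strictly antitone
    have hθanti : StrictAnti θ := by
      intro i i' hlt
      by_contra hge
      push_neg at hge
      have : x i' ≤ x i := by
        rw [hxθ i, hxθ i']
        rcases eq_or_lt_of_le hge with h | h
        · rw [h]
        · exact le_of_lt (Real.strictAntiOn_cos (hθmem i) (hθmem i') h)
      exact absurd (hx hlt) (not_lt.mpr this)
    have hmanti : StrictAnti m := by
      intro i i' hlt
      have h1 : θ i' < θ i := hθanti hlt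
      have h2 : (m i' : ℝ) * Real.pi < (m i : ℝ) * Real.pi := by
        rw [hm i, hm i']
        exact mul_lt_mul_of_pos_left h1 hnR
      have : (m i' : ℝ) < m i := lt_of_mul_lt_mul_right (by linarith) (le_of_lt Real.pi_pos)
      exact_mod_cast this
    have hmval := strictAnti_fin_int n m hmanti hmlb hmub j
    -- conclude
    have hjle : (j:ℕ) ≤ n := by omega
    have hcast : (((n - (j:ℕ)) : ℕ) : ℝ) = (n:ℝ) - (j:ℕ) := by
      push_cast [hjle]; ring
    have hmR : (m j : ℝ) = (n:ℝ) - (j:ℕ) := by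
      rw [hmval]; push_cast; ring
    have hθval : θ j = (((n - (j:ℕ)) : ℕ) : ℝ) * Real.pi / n := by
      have heq := hm j
      rw [hmR] at heq
      rw [hcast]
      field_simp at heq ⊢
      linarith
    rw [hxθ j, hθval]
  · -- backward: at Chebyshev extrema, t j = (-1)^(n-j)
    intro hX j
    have hjle : (j:ℕ) ≤ n := by omega
    show (Chebyshev.T ℝ (n:ℤ)).eval (x j) = (-1:ℝ)^(n - (j:ℕ))
    rw [hX j, Chebyshev.T_real_cos]
    have harg : (((n:ℤ)):ℝ) * ((((n - (j:ℕ)) : ℕ) : ℝ) * Real.pi / n)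
        = (((n - (j:ℕ)) : ℕ) : ℝ) * Real.pi := by
      push_cast
      field_simp
    rw [harg]
    simpa using Real.cos_add_nat_mul_pi 0 (n - (j:ℕ))
end

section
/- Let f : [a,b] → ℝ be monotone, g : [a,b] → ℂ continuous, and write I = ∫_a^b f(x) g(x) dx = |I| e^{iθ}. Then there exists c ∈ [a,b] such that |I| = f(a) · Re(e^{-iθ} ∫_a^c g(x) dx) + f(b) · Re(e^{-iθ} ∫_c^b g(x) dx); in particular |I| ≤ |f(a) ∫_a^c g| + |f(b) ∫_c^b g|. -/
/-!
For monotone `f` and `H y = ∫ t in a..y, h t`, on a short interval `[u, v]` the integral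
`∫ u..v, f * h` differs from `f v * (H v - H u)` by at most `(f v - f u) * sup |h| * (v - u)`.
Summing by parts over a fine partition gives `m * (f b - f a) ≤ f b * H b - ∫ a..b, f * h ≤
M * (f b - f a)`, where `m` and `M` are the extreme values of `H`, and the intermediate value
theorem for `H` produces `c` with `∫ a..b, f * h = f a * H c + f b * (H b - H c)`.
For complex `g`, multiplying by `exp (-θ * I)` turns `∫ f * g` into its norm, so the real
statement applies to `h = re (exp (-θ * I) * g)`, and `r * re (e * w) ≤ ‖r * w‖` for `‖e‖ = 1`.
-/

open Set MeasureTheory intervalIntegral Filter Topology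

theorem integral_le_sub_of_forall_le_sub {F ψ : ℝ → ℝ} {a b δ : ℝ} (hab : a ≤ b) (hδ : 0 < δ)
    (hF : IntervalIntegrable F volume a b)
    (hloc : ∀ u v, a ≤ u → u ≤ v → v ≤ b → v - u ≤ δ → ∫ x in u..v, F x ≤ ψ v - ψ u) :
    ∫ x in a..b, F x ≤ ψ b - ψ a := by
  have hFi : ∀ {u v}, u ∈ Icc a b → v ∈ Icc a b → IntervalIntegrable F volume u v :=
    fun hu hv => hF.mono_set (by rw [uIcc_of_le hab]; exact uIcc_subset_Icc hu hv)
  suffices key : ∀ n : ℕ, ∀ v ∈ Icc a b, v - a ≤ n * δ → ∫ x in a..v, F x ≤ ψ v - ψ a by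
    obtain ⟨n, hn⟩ := exists_nat_ge ((b - a) / δ)
    exact key n b (right_mem_Icc.2 hab) ((div_le_iff₀ hδ).1 hn)
  intro n
  induction n with
  | zero =>
    intro v hv hva
    obtain rfl : v = a := by push_cast at hva; linarith [hv.1]
    simp
  | succ n ih =>
    intro v hv hva
    push_cast at hva
    set w := max a (v - δ)
    have hw : w ∈ Icc a b := ⟨le_max_left _ _, max_le hab (by linarith [hv.2])⟩
    have hwa : w ≤ a + n * δ := max_le (le_add_of_nonneg_right (by positivity)) (by linarith)
    have hvw : v - δ ≤ w := le_max_right _ _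
    rw [← integral_add_adjacent_intervals (hFi (left_mem_Icc.2 hab) hw) (hFi hw hv)]
    linarith [ih w hw (by linarith), hloc w v hw.1 (max_le hv.1 (by linarith)) hv.2 (by linarith)]

section

variable {f h : ℝ → ℝ}

theorem integral_mul_le_mul_integral_add {u v C : ℝ} (huv : u ≤ v)
    (hf : MonotoneOn f (Icc u v)) (hh : ContinuousOn h (Icc u v))
    (hC : ∀ x ∈ Icc u v, ‖h x‖ ≤ C) :
    ∫ x in u..v, f x * h x ≤ f v * (∫ x in u..v, h x) + (f v - f u) * C * (v - u) := by
  rw [← uIcc_of_le huv] at hf hh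
  have hdiff : (∫ x in u..v, f x * h x) - f v * ∫ x in u..v, h x
      = ∫ x in u..v, (f x - f v) * h x := by
    simp only [sub_mul]
    rw [integral_sub (hf.intervalIntegrable.mul_continuousOn hh)
      (hh.intervalIntegrable.const_mul _), intervalIntegral.integral_const_mul]
  have hbound : ∀ x ∈ uIoc u v, ‖(f x - f v) * h x‖ ≤ (f v - f u) * C := by
    intro x hx
    have hx' := uIoc_subset_uIcc hx
    have hfx : ‖f x - f v‖ ≤ f v - f u := by
      have hxv := hf hx' right_mem_uIcc (uIcc_of_le huv ▸ hx').2
      rw [Real.norm_eq_abs, abs_of_nonpos (by linarith)]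
      linarith [hf left_mem_uIcc hx' (uIcc_of_le huv ▸ hx').1]
    rw [norm_mul]
    exact mul_le_mul hfx (hC x (uIcc_of_le huv ▸ hx')) (norm_nonneg _)
      (hfx.trans' (norm_nonneg _))
  have := norm_integral_le_of_norm_le_const hbound
  rw [abs_of_nonneg (sub_nonneg.2 huv), ← hdiff, Real.norm_eq_abs] at this
  linarith [le_abs_self ((∫ x in u..v, f x * h x) - f v * ∫ x in u..v, h x)]

theorem integral_mul_le_of_monotoneOn {a b m : ℝ} (hab : a ≤ b)
    (hf : MonotoneOn f (Icc a b)) (hh : ContinuousOn h (Icc a b))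
    (hm : ∀ y ∈ Icc a b, m ≤ ∫ t in a..y, h t) :
    ∫ x in a..b, f x * h x ≤ f b * (∫ x in a..b, h x) - (f b - f a) * m := by
  obtain ⟨C, hC⟩ := isCompact_Icc.exists_bound_of_continuousOn hh
  have hC₀ : 0 ≤ C := (norm_nonneg _).trans (hC a (left_mem_Icc.2 hab))
  have hhi : ∀ {u v}, u ∈ Icc a b → v ∈ Icc a b → IntervalIntegrable h volume u v :=
    fun hu hv => (hh.mono (uIcc_subset_Icc hu hv)).intervalIntegrable
  have hδ : ∀ δ > 0, ∫ x in a..b, f x * h x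
      ≤ f b * (∫ x in a..b, h x) - (f b - f a) * (m - C * δ) := by
    intro δ hδ
    rw [← uIcc_of_le hab] at hf hh
    -- Abel summation: the increments of `f * (H - (m - C * δ))` over short intervals dominate
    -- the pieces of the integral, and they telescope.
    have := integral_le_sub_of_forall_le_sub
      (ψ := fun y => f y * ((∫ t in a..y, h t) - (m - C * δ))) hab hδ
      (hf.intervalIntegrable.mul_continuousOn hh) ?_
    · simp only [integral_same] at this
      linarith
    intro u v hu huv hvb hvu
    rw [uIcc_of_le hab] at hf hh
    have hu' : u ∈ Icc a b := ⟨hu, huv.trans hvb⟩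
    have hv' : v ∈ Icc a b := ⟨hu.trans huv, hvb⟩
    have hsub : Icc u v ⊆ Icc a b := Icc_subset_Icc hu hvb
    have hloc := integral_mul_le_mul_integral_add huv (hf.mono hsub) (hh.mono hsub)
      (fun x hx => hC x (hsub hx))
    rw [← integral_interval_sub_left (hhi (left_mem_Icc.2 hab) hv')
      (hhi (left_mem_Icc.2 hab) hu')] at hloc
    have hfuv : 0 ≤ f v - f u := sub_nonneg.2 (hf hu' hv' huv)
    nlinarith [mul_nonneg hfuv (sub_nonneg.2 (hm u hu')),
      mul_le_mul_of_nonneg_left (mul_le_mul_of_nonneg_left hvu hC₀) hfuv]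
  have hlim : Tendsto (fun δ => f b * (∫ x in a..b, h x) - (f b - f a) * (m - C * δ))
      (𝓝[>] 0) (𝓝 (f b * (∫ x in a..b, h x) - (f b - f a) * m)) := by
    have : Continuous fun δ => f b * (∫ x in a..b, h x) - (f b - f a) * (m - C * δ) := by
      fun_prop
    simpa using (this.tendsto 0).mono_left nhdsWithin_le_nhds
  exact ge_of_tendsto hlim (eventually_mem_nhdsWithin.mono hδ)

theorem le_integral_mul_of_monotoneOn {a b M : ℝ} (hab : a ≤ b)
    (hf : MonotoneOn f (Icc a b)) (hh : ContinuousOn h (Icc a b))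
    (hM : ∀ y ∈ Icc a b, ∫ t in a..y, h t ≤ M) :
    f b * (∫ x in a..b, h x) - (f b - f a) * M ≤ ∫ x in a..b, f x * h x := by
  have := integral_mul_le_of_monotoneOn (m := -M) hab hf hh.neg
    (fun y hy => by simpa [intervalIntegral.integral_neg] using hM y hy)
  simp only [Pi.neg_apply, mul_neg, intervalIntegral.integral_neg] at this
  linarith

theorem exists_integral_mul_eq_of_monotoneOn {a b : ℝ} (hab : a ≤ b)
    (hf : MonotoneOn f (Icc a b)) (hh : ContinuousOn h (Icc a b)) :
    ∃ c ∈ Icc a b, ∫ x in a..b, f x * h x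
      = f a * (∫ x in a..c, h x) + f b * ∫ x in c..b, h x := by
  have hH : ContinuousOn (fun y => ∫ t in a..y, h t) (Icc a b) := by
    simpa [uIcc_of_le hab] using
      continuousOn_primitive_interval (hh.integrableOn_Icc.mono_set (uIcc_of_le hab).subset)
  obtain ⟨p, hp, hpmin⟩ := isCompact_Icc.exists_isMinOn (nonempty_Icc.2 hab) hH
  obtain ⟨q, hq, hqmax⟩ := isCompact_Icc.exists_isMaxOn (nonempty_Icc.2 hab) hH
  have hlow := integral_mul_le_of_monotoneOn hab hf hh hpmin
  have hup := le_integral_mul_of_monotoneOn hab hf hh hqmax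
  obtain ⟨c, hc, hHc⟩ := intermediate_value_uIcc
    ((hH.const_smul (f b - f a)).mono (uIcc_subset_Icc hp hq))
    (Icc_subset_uIcc ⟨by linarith, by linarith⟩ :
      (f b * ∫ x in a..b, h x) - ∫ x in a..b, f x * h x
        ∈ uIcc ((f b - f a) * ∫ t in a..p, h t) ((f b - f a) * ∫ t in a..q, h t))
  have hc' := uIcc_subset_Icc hp hq hc
  simp only [Pi.smul_apply, smul_eq_mul] at hHc
  refine ⟨c, hc', ?_⟩
  have hi : ∀ {y}, y ∈ Icc a b → IntervalIntegrable h volume a y := fun hy =>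
    (hh.mono (uIcc_subset_Icc (left_mem_Icc.2 hab) hy)).intervalIntegrable
  rw [← integral_interval_sub_left (hi (right_mem_Icc.2 hab)) (hi hc')]
  linarith

theorem exists_integral_mul_eq_of_antitoneOn {a b : ℝ} (hab : a ≤ b)
    (hf : AntitoneOn f (Icc a b)) (hh : ContinuousOn h (Icc a b)) :
    ∃ c ∈ Icc a b, ∫ x in a..b, f x * h x
      = f a * (∫ x in a..c, h x) + f b * ∫ x in c..b, h x := by
  obtain ⟨c, hc, heq⟩ := exists_integral_mul_eq_of_monotoneOn hab hf.neg hh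
  refine ⟨c, hc, ?_⟩
  simp only [neg_mul, intervalIntegral.integral_neg] at heq
  linarith

theorem exists_integral_mul_eq {a b : ℝ} (hab : a ≤ b)
    (hf : MonotoneOn f (Icc a b) ∨ AntitoneOn f (Icc a b)) (hh : ContinuousOn h (Icc a b)) :
    ∃ c ∈ Icc a b, ∫ x in a..b, f x * h x
      = f a * (∫ x in a..c, h x) + f b * ∫ x in c..b, h x :=
  hf.elim (exists_integral_mul_eq_of_monotoneOn hab · hh)
    (exists_integral_mul_eq_of_antitoneOn hab · hh)

end

namespace Complex

theorem exp_neg_arg_mul_I_mul_self (z : ℂ) : exp (-(z.arg : ℂ) * I) * z = ‖z‖ := by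
  nth_rw 2 [← norm_mul_exp_arg_mul_I z]
  rw [mul_left_comm, ← exp_add, neg_mul, neg_add_cancel, exp_zero, mul_one]

theorem norm_exp_neg_arg_mul_I (z : ℂ) : ‖exp (-(z.arg : ℂ) * I)‖ = 1 := by
  simpa using norm_exp_ofReal_mul_I (-z.arg)

theorem re_mul_intervalIntegral (w : ℂ) {g : ℝ → ℂ} {u v : ℝ}
    (hg : IntervalIntegrable g volume u v) :
    (w * ∫ x in u..v, g x).re = ∫ x in u..v, (w * g x).re := by
  rw [← intervalIntegral.integral_const_mul]
  exact (reCLM.intervalIntegral_comp_comm (hg.const_mul w)).symm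

theorem norm_intervalIntegral_eq_integral_re {g : ℝ → ℂ} {u v : ℝ}
    (hg : IntervalIntegrable g volume u v) :
    ‖∫ x in u..v, g x‖
      = ∫ x in u..v, (exp (-((∫ x in u..v, g x).arg : ℂ) * I) * g x).re := by
  rw [← re_mul_intervalIntegral _ hg, exp_neg_arg_mul_I_mul_self, ofReal_re]

theorem mul_re_mul_le_norm {e : ℂ} (he : ‖e‖ = 1) (r : ℝ) (w : ℂ) :
    r * (e * w).re ≤ ‖(r : ℂ) * w‖ :=
  calc r * (e * w).re = ((r : ℂ) * (e * w)).re := (re_ofReal_mul r _).symm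
    _ ≤ ‖(r : ℂ) * (e * w)‖ := re_le_norm _
    _ = ‖(r : ℂ) * w‖ := by rw [norm_mul, norm_mul, norm_mul, he, one_mul]

end Complex

theorem complex_second_mean_value (a b : ℝ) (hab : a ≤ b) (f : ℝ → ℝ) (g : ℝ → ℂ)
    (hf : MonotoneOn f (Set.Icc a b) ∨ AntitoneOn f (Set.Icc a b))
    (hg : ContinuousOn g (Set.Icc a b)) :
    ∃ c ∈ Set.Icc a b,
      ‖(∫ x in a..b, (f x : ℂ) * g x)‖ =
        f a * (Complex.exp (-((∫ x in a..b, (f x : ℂ) * g x).arg : ℂ) * Complex.I) *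
            ∫ x in a..c, g x).re +
        f b * (Complex.exp (-((∫ x in a..b, (f x : ℂ) * g x).arg : ℂ) * Complex.I) *
            ∫ x in c..b, g x).re ∧
      ‖(∫ x in a..b, (f x : ℂ) * g x)‖ ≤
        ‖((f a : ℂ) * ∫ x in a..c, g x)‖ +
        ‖((f b : ℂ) * ∫ x in c..b, g x)‖ := by
  set e := Complex.exp (-((∫ x in a..b, (f x : ℂ) * g x).arg : ℂ) * Complex.I)
  have hfi : IntervalIntegrable f volume a b := by
    rw [← uIcc_of_le hab] at hf
    exact hf.elim MonotoneOn.intervalIntegrable AntitoneOn.intervalIntegrable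
  have hgi : ∀ {u v}, u ∈ Icc a b → v ∈ Icc a b → IntervalIntegrable g volume u v :=
    fun hu hv => (hg.mono (uIcc_subset_Icc hu hv)).intervalIntegrable
  have heg : ContinuousOn (fun x => (e * g x).re) (Icc a b) := by fun_prop
  obtain ⟨c, hc, hceq⟩ := exists_integral_mul_eq hab hf heg
  have hnorm : ‖∫ x in a..b, (f x : ℂ) * g x‖
      = f a * (e * ∫ x in a..c, g x).re + f b * (e * ∫ x in c..b, g x).re := by
    have hfgi : IntervalIntegrable (fun x => (f x : ℂ) * g x) volume a b :=
      IntervalIntegrable.mul_continuousOn ⟨hfi.1.ofReal, hfi.2.ofReal⟩ (uIcc_of_le hab ▸ hg)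
    rw [Complex.norm_intervalIntegral_eq_integral_re hfgi,
      Complex.re_mul_intervalIntegral e (hgi (left_mem_Icc.2 hab) hc),
      Complex.re_mul_intervalIntegral e (hgi hc (right_mem_Icc.2 hab)), ← hceq]
    refine integral_congr fun x _ => ?_
    rw [mul_left_comm, Complex.re_ofReal_mul]
  have he : ‖e‖ = 1 := Complex.norm_exp_neg_arg_mul_I _
  exact ⟨c, hc, hnorm,
    hnorm ▸ add_le_add (Complex.mul_re_mul_le_norm he _ _) (Complex.mul_re_mul_le_norm he _ _)⟩
end

section
/- Let f : [a,b] → ℝ be of constant sign with |f| decreasing, and g : [a,b] → ℂ continuous, with I = ∫_a^b f(x) g(x) dx = |I| e^{iθ}. Then there exists c ∈ [a,b] with |I| = f(a) · Re(e^{-iθ} ∫_a^c g(x) dx) ≤ |f(a) ∫_a^c g(x) dx|. -/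
/-!
For `f ≥ 0` decreasing on `[a, b]` and `h` real and continuous, the layer-cake formula gives
`∫_a^b f h = ∫_0^{f a} (∫_{(a,b] ∩ {f > t}} h) dt`. Each superlevel set `(a,b] ∩ {f > t}` is, up
to a null set, an interval `(a, s]`, so the inner integral is a value `G s` of the primitive
`G c = ∫_a^c h`. The outer integral is therefore `f a` times an average of values of `G` on
`[a, b]`, and the interval `G '' [a, b]` contains it: this is Bonnet's second mean value theorem
`∫_a^b f h = f a ∫_a^c h`. The sign of `f` is absorbed by `f ↦ -f`, and the complex case follows
by applying this to `h = Re (e^{-iθ} g)`, since `|I| = Re (e^{-iθ} I)`.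
-/

open MeasureTheory Set
open scoped ENNReal Pointwise

section LayerCake

variable {α : Type*} [MeasurableSpace α] {μ : Measure α} {f h : α → ℝ}

theorem integral_indicator_Ioo_lt_eq_setIntegral (t : ℝ) (hf : Measurable f) :
    ∫ x, (Ioo 0 (f x)).indicator (fun _ => h x) t ∂μ =
      (Ioi 0).indicator (fun t => ∫ x in {x | t < f x}, h x ∂μ) t := by
  by_cases ht : 0 < t
  · rw [indicator_of_mem (mem_Ioi.2 ht),
      ← integral_indicator (measurableSet_lt measurable_const hf)]
    congr 1 with x
    simp [indicator, ht]
  · simp [indicator, ht]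

variable [SFinite μ]

theorem integrable_indicator_Ioo_prod (hf : Measurable f) (hf0 : 0 ≤ᵐ[μ] f)
    (hh : AEStronglyMeasurable h μ) (hfh : Integrable (fun x => f x * h x) μ) :
    Integrable (fun p : ℝ × α => (Ioo 0 (f p.2)).indicator (fun _ => h p.2) p.1)
      (volume.prod μ) := by
  have hmeas : MeasurableSet {p : ℝ × α | p.1 ∈ Ioo 0 (f p.2)} :=
    (measurableSet_lt measurable_const measurable_fst).inter
      (measurableSet_lt measurable_fst (hf.comp measurable_snd))
  have hψ : AEStronglyMeasurable
      (fun p : ℝ × α => (Ioo 0 (f p.2)).indicator (fun _ => h p.2) p.1) (volume.prod μ) :=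
    hh.comp_snd.indicator hmeas
  refine (integrable_prod_iff' hψ).2 ⟨?_, ?_⟩
  · refine Filter.Eventually.of_forall fun x => ?_
    exact (integrableOn_const (C := h x) measure_Ioo_lt_top.ne).integrable_indicator
      (s := Ioo 0 (f x)) measurableSet_Ioo
  · refine hfh.norm.congr (hf0.mono fun x (hx : 0 ≤ f x) => ?_)
    simp only [norm_indicator_eq_indicator_norm]
    rw [integral_indicator_const _ measurableSet_Ioo, Real.volume_real_Ioo_of_le hx]
    simp [abs_of_nonneg hx]

theorem integrableOn_setIntegral_lt (hf : Measurable f) (hf0 : 0 ≤ᵐ[μ] f)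
    (hh : AEStronglyMeasurable h μ) (hfh : Integrable (fun x => f x * h x) μ) :
    IntegrableOn (fun t => ∫ x in {x | t < f x}, h x ∂μ) (Ioi 0) := by
  have := (integrable_indicator_Ioo_prod hf hf0 hh hfh).integral_prod_left
  simp only [integral_indicator_Ioo_lt_eq_setIntegral _ hf] at this
  exact (integrable_indicator_iff measurableSet_Ioi).1 this

theorem integral_mul_eq_integral_Ioi_setIntegral_lt (hf : Measurable f) (hf0 : 0 ≤ᵐ[μ] f)
    (hh : AEStronglyMeasurable h μ) (hfh : Integrable (fun x => f x * h x) μ) :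
    ∫ x, f x * h x ∂μ = ∫ t in Ioi 0, ∫ x in {x | t < f x}, h x ∂μ := by
  rw [← integral_indicator measurableSet_Ioi]
  simp only [← integral_indicator_Ioo_lt_eq_setIntegral _ hf]
  rw [integral_integral_swap (integrable_indicator_Ioo_prod hf hf0 hh hfh)]
  refine integral_congr_ae (hf0.mono fun x (hx : 0 ≤ f x) => ?_)
  dsimp only
  rw [integral_indicator_const _ measurableSet_Ioo, Real.volume_real_Ioo_of_le hx, sub_zero,
    smul_eq_mul]

end LayerCake

theorem Convex.setIntegral_mem_smul {α E : Type*} [MeasurableSpace α] [NormedAddCommGroup E]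
    [NormedSpace ℝ E] [CompleteSpace E] {μ : Measure α} {s : Set E} {t : Set α} {f : α → E}
    (hs : Convex ℝ s) (hsc : IsClosed s) (hne : s.Nonempty) (ht : μ t ≠ ∞)
    (hfs : ∀ᵐ x ∂μ.restrict t, f x ∈ s) (hfi : IntegrableOn f t μ) :
    ∫ x in t, f x ∂μ ∈ μ.real t • s := by
  by_cases h0 : μ t = 0
  · rw [Measure.restrict_eq_zero.2 h0, integral_zero_measure, measureReal_def, h0,
      ENNReal.toReal_zero, zero_smul_set hne]
    exact Set.zero_mem_zero
  · refine ⟨⨍ x in t, f x ∂μ, hs.set_average_mem hsc h0 ht hfs hfi, ?_⟩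
    rw [setAverage_eq]
    exact smul_inv_smul₀ ((measureReal_ne_zero_iff ht).2 h0) _

theorem IsLowerSet.exists_inter_Ioc_ae_eq_Ioc {A : Set ℝ} (hA : IsLowerSet A) {a b : ℝ}
    (hab : a ≤ b) : ∃ s ∈ Icc a b, (A ∩ Ioc a b : Set ℝ) =ᵐ[volume] Ioc a s := by
  set B := insert a (A ∩ Ioc a b)
  have hB : BddAbove B := ⟨b, by rintro x (rfl | hx); exacts [hab, hx.2.2]⟩
  have hIoo : Ioo a (sSup B) ⊆ A ∩ Ioc a b := by
    intro x hx
    obtain ⟨y, hy | hy, hxy⟩ := exists_lt_of_lt_csSup (insert_nonempty _ _) hx.2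
    · exact absurd (hy ▸ hxy) hx.1.not_gt
    · exact ⟨hA hxy.le hy.1, hx.1, hxy.le.trans hy.2.2⟩
  have hIoc : A ∩ Ioc a b ⊆ Ioc a (sSup B) :=
    fun x hx => ⟨hx.2.1, le_csSup hB (mem_insert_of_mem _ hx)⟩
  refine ⟨sSup B, ⟨le_csSup hB (mem_insert _ _), csSup_le (insert_nonempty _ _) ?_⟩, ?_⟩
  · rintro x (rfl | hx); exacts [hab, hx.2.2]
  · exact hIoc.eventuallyLE.antisymm (Ioo_ae_eq_Ioc.symm.le.trans hIoo.eventuallyLE)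

theorem Antitone.setIntegral_lt_inter_Ioc_mem_image_primitive {a b : ℝ} (hab : a ≤ b)
    {f : ℝ → ℝ} (hf : Antitone f) (h : ℝ → ℝ) (t : ℝ) :
    ∫ x in {x | t < f x} ∩ Ioc a b, h x ∈ (fun c => ∫ x in a..c, h x) '' Icc a b := by
  obtain ⟨s, hs, hae⟩ := IsLowerSet.exists_inter_Ioc_ae_eq_Ioc (A := {x | t < f x})
    (fun x y hyx (hx : t < f x) => hx.trans_le (hf hyx)) hab
  exact ⟨s, hs, (intervalIntegral.integral_of_le hs.1).trans (setIntegral_congr_set hae).symm⟩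

theorem Antitone.exists_intervalIntegral_mul_eq_mul {a b : ℝ} (hab : a ≤ b) {f h : ℝ → ℝ}
    (hf : Antitone f) (hfb : 0 ≤ f b) (hh : ContinuousOn h (Icc a b)) :
    ∃ c ∈ Icc a b, ∫ x in a..b, f x * h x = f a * ∫ x in a..c, h x := by
  set μ := volume.restrict (Ioc a b)
  set φ : ℝ → ℝ := fun t => ∫ x in {x | t < f x}, h x ∂μ
  have hlt : ∀ t, MeasurableSet {x | t < f x} :=
    fun t => measurableSet_lt measurable_const hf.measurable
  have hf0 : 0 ≤ᵐ[μ] f :=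
    ae_restrict_of_forall_mem measurableSet_Ioc fun x hx => hfb.trans (hf hx.2)
  have hhμ : AEStronglyMeasurable h μ :=
    (hh.mono Ioc_subset_Icc_self).aestronglyMeasurable measurableSet_Ioc
  have hfh : Integrable (fun x => f x * h x) μ := by
    rw [← uIcc_of_le hab] at hh
    exact ((hf.antitoneOn _).intervalIntegrable.mul_continuousOn hh).1
  have hG : ContinuousOn (fun c => ∫ x in a..c, h x) (Icc a b) := by
    rw [← uIcc_of_le hab] at hh ⊢
    exact intervalIntegral.continuousOn_primitive_interval
      (hh.integrableOn_compact isCompact_uIcc)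
  have hφG : ∀ t, φ t ∈ (fun c => ∫ x in a..c, h x) '' Icc a b := fun t => by
    simpa only [φ, μ, Measure.restrict_restrict (hlt t)] using
      hf.setIntegral_lt_inter_Ioc_mem_image_primitive hab h t
  have hφ0 : ∀ t ∈ Ioi 0 \ Ioc 0 (f a), φ t = 0 := by
    intro t ⟨ht0, hta⟩
    have hempty : {x | t < f x} ∩ Ioc a b = ∅ :=
      eq_empty_of_forall_notMem fun x hx => hta ⟨ht0, (hx.1.trans_le (hf hx.2.1.le)).le⟩
    simp only [φ, μ, Measure.restrict_restrict (hlt t), hempty, Measure.restrict_empty,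
      integral_zero_measure]
  have hlayer : ∫ x in a..b, f x * h x = ∫ t in Ioc 0 (f a), φ t := by
    rw [intervalIntegral.integral_of_le hab,
      integral_mul_eq_integral_Ioi_setIntegral_lt hf.measurable hf0 hhμ hfh]
    change ∫ t in Ioi 0, φ t = _
    exact (setIntegral_eq_of_subset_of_forall_sdiff_eq_zero measurableSet_Ioi
      Ioc_subset_Ioi_self hφ0)
  obtain ⟨-, ⟨c, hc, rfl⟩, hcφ⟩ := Convex.setIntegral_mem_smul
    (isPreconnected_Icc.image _ hG).convex (isCompact_Icc.image_of_continuousOn hG).isClosed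
    ((nonempty_Icc.2 hab).image _) measure_Ioc_lt_top.ne (ae_of_all _ hφG)
    ((integrableOn_setIntegral_lt hf.measurable hf0 hhμ hfh).mono_set Ioc_subset_Ioi_self)
  refine ⟨c, hc, ?_⟩
  rw [hlayer, ← hcφ, Real.volume_real_Ioc_of_le (hfb.trans (hf hab)), sub_zero]
  rfl

theorem AntitoneOn.exists_intervalIntegral_mul_eq_mul {a b : ℝ} (hab : a ≤ b) {f h : ℝ → ℝ}
    (hf : AntitoneOn f (Icc a b)) (hfb : 0 ≤ f b) (hh : ContinuousOn h (Icc a b)) :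
    ∃ c ∈ Icc a b, ∫ x in a..b, f x * h x = f a * ∫ x in a..c, h x := by
  have ha := left_mem_Icc.2 hab
  have hb := right_mem_Icc.2 hab
  obtain ⟨F, hF, hfF⟩ := hf.exists_antitone_extension
    ⟨f b, forall_mem_image.2 fun x hx => hf hx hb hx.2⟩
    ⟨f a, forall_mem_image.2 fun x hx => hf ha hx hx.1⟩
  obtain ⟨c, hc, hcF⟩ := hF.exists_intervalIntegral_mul_eq_mul hab (hfF hb ▸ hfb) hh
  refine ⟨c, hc, ?_⟩
  rw [hfF ha, ← hcF]
  refine intervalIntegral.integral_congr fun x hx => ?_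
  rw [uIcc_of_le hab] at hx
  rw [hfF hx]

theorem AntitoneOn.of_abs_of_nonneg {s : Set ℝ} {f : ℝ → ℝ}
    (hf : AntitoneOn (fun x => |f x|) s) (hf0 : ∀ x ∈ s, 0 ≤ f x) : AntitoneOn f s :=
  hf.congr fun x hx => abs_of_nonneg (hf0 x hx)

theorem AntitoneOn.neg_of_abs_of_nonpos {s : Set ℝ} {f : ℝ → ℝ}
    (hf : AntitoneOn (fun x => |f x|) s) (hf0 : ∀ x ∈ s, f x ≤ 0) :
    AntitoneOn (fun x => -f x) s :=
  hf.congr fun x hx => abs_of_nonpos (hf0 x hx)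

theorem exists_intervalIntegral_mul_eq_mul_of_abs_antitoneOn {a b : ℝ} (hab : a ≤ b)
    {f h : ℝ → ℝ} (hsign : (∀ x ∈ Icc a b, 0 ≤ f x) ∨ (∀ x ∈ Icc a b, f x ≤ 0))
    (hdec : AntitoneOn (fun x => |f x|) (Icc a b)) (hh : ContinuousOn h (Icc a b)) :
    ∃ c ∈ Icc a b, ∫ x in a..b, f x * h x = f a * ∫ x in a..c, h x := by
  rcases hsign with hpos | hneg
  · exact (hdec.of_abs_of_nonneg hpos).exists_intervalIntegral_mul_eq_mul hab
      (hpos b (right_mem_Icc.2 hab)) hh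
  · obtain ⟨c, hc, hcf⟩ := (hdec.neg_of_abs_of_nonpos hneg).exists_intervalIntegral_mul_eq_mul
      hab (neg_nonneg.2 (hneg b (right_mem_Icc.2 hab))) hh
    refine ⟨c, hc, ?_⟩
    simpa [neg_mul, intervalIntegral.integral_neg] using hcf

theorem intervalIntegrable_of_abs_antitoneOn {a b : ℝ} (hab : a ≤ b) {f : ℝ → ℝ}
    (hsign : (∀ x ∈ Icc a b, 0 ≤ f x) ∨ (∀ x ∈ Icc a b, f x ≤ 0))
    (hdec : AntitoneOn (fun x => |f x|) (Icc a b)) : IntervalIntegrable f volume a b := by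
  rw [← uIcc_of_le hab] at hsign hdec
  rcases hsign with hpos | hneg
  · exact (hdec.of_abs_of_nonneg hpos).intervalIntegrable
  · simpa [Pi.neg_def] using
      ((hdec.neg_of_abs_of_nonpos hneg).intervalIntegrable (μ := volume)).neg

theorem Complex.norm_eq_re_exp_neg_arg_mul_I_mul (z : ℂ) :
    ‖z‖ = (exp (-(arg z : ℂ) * I) * z).re := by
  have hz := norm_mul_exp_arg_mul_I z
  set θ := arg z
  conv_rhs => rw [← hz]
  rw [mul_left_comm, ← exp_add, neg_mul, neg_add_cancel, exp_zero, mul_one, ofReal_re]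

theorem Complex.re_mul_intervalIntegral_s9 {u : ℝ → ℂ} {a b : ℝ}
    (hu : IntervalIntegrable u volume a b) (w : ℂ) :
    (w * ∫ x in a..b, u x).re = ∫ x in a..b, (w * u x).re := by
  rw [← intervalIntegral.integral_const_mul]
  exact (intervalIntegral.intervalIntegral_re (hu.const_mul w)).symm

theorem complex_second_mean_value_decreasing (a b : ℝ) (hab : a ≤ b) (f : ℝ → ℝ) (g : ℝ → ℂ)
    (hsign : (∀ x ∈ Set.Icc a b, 0 ≤ f x) ∨ (∀ x ∈ Set.Icc a b, f x ≤ 0))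
    (hdec : AntitoneOn (fun x => |f x|) (Set.Icc a b))
    (hg : ContinuousOn g (Set.Icc a b)) :
    ∃ c ∈ Set.Icc a b,
      ‖∫ x in a..b, (f x : ℂ) * g x‖ =
        f a * (Complex.exp (-((∫ x in a..b, (f x : ℂ) * g x).arg : ℂ) * Complex.I) *
            ∫ x in a..c, g x).re ∧
      ‖∫ x in a..b, (f x : ℂ) * g x‖ ≤
        ‖(f a : ℂ) * ∫ x in a..c, g x‖ := by
  set I := ∫ x in a..b, (f x : ℂ) * g x
  set e := Complex.exp (-(I.arg : ℂ) * Complex.I)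
  obtain ⟨c, hc, hcf⟩ := exists_intervalIntegral_mul_eq_mul_of_abs_antitoneOn hab hsign hdec
    (h := fun x => (e * g x).re)
    (Complex.continuous_re.comp_continuousOn (continuousOn_const.mul hg))
  have hf := intervalIntegrable_of_abs_antitoneOn hab hsign hdec
  have hfg : IntervalIntegrable (fun x => (f x : ℂ) * g x) volume a b :=
    IntervalIntegrable.mul_continuousOn ⟨hf.1.ofReal, hf.2.ofReal⟩ (by rwa [uIcc_of_le hab])
  have hgc : IntervalIntegrable g volume a c :=
    (hg.mono (Icc_subset_Icc_right hc.2)).intervalIntegrable_of_Icc hc.1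
  have hnorm : ‖I‖ = f a * (e * ∫ x in a..c, g x).re := by
    rw [show ‖I‖ = (e * I).re from Complex.norm_eq_re_exp_neg_arg_mul_I_mul I,
      Complex.re_mul_intervalIntegral_s9 hfg, Complex.re_mul_intervalIntegral_s9 hgc]
    simpa only [mul_left_comm e, Complex.re_ofReal_mul] using hcf
  refine ⟨c, hc, hnorm, ?_⟩
  have he : ‖e‖ = 1 := by simp [e, Complex.norm_exp]
  calc ‖I‖ ≤ |f a| * |(e * ∫ x in a..c, g x).re| := by
        rw [hnorm, ← abs_mul]; exact le_abs_self _
    _ ≤ |f a| * ‖e * ∫ x in a..c, g x‖ :=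
      mul_le_mul_of_nonneg_left (Complex.abs_re_le_norm _) (abs_nonneg _)
    _ = ‖(f a : ℂ) * ∫ x in a..c, g x‖ := by
      rw [norm_mul, norm_mul, he, one_mul, Complex.norm_real, Real.norm_eq_abs]
end

section
/- Suppose f : [a,b] → ℝ is differentiable on (a,b), f' is increasing, and f'(x) ≥ λ > 0 on [a,b]. Write I = ∫_a^b e^{i f(x)} dx = |I| e^{iθ}. Then |I| ≤ (1 + sin(θ - f(a)))/λ; in particular |∫_a^b e^{i f(x)} dx| ≤ 2/λ. -/
/-!
Writing `I = ‖I‖ e^{iθ}`, we get `‖I‖ = ∫ cos (f - θ)`, and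
`cos (f - θ) = (sin (f - θ))' / f'` where `1 / f'` is positive, decreasing and at most `1 / λ`.
Abel summation (a discrete second mean value theorem) against a partition of `[a, b]` bounds
the integral by `(1 - sin (f a - θ)) / f' a`, up to the cost of freezing `f'` at the left end
of each piece, which is at most `mesh * (f' b - f' a) / λ` and vanishes as the mesh tends to `0`.
-/

open Set Real Finset intervalIntegral

theorem sum_range_mul_sub_le_of_le_one (w S : ℕ → ℝ) (n : ℕ)
    (hw : ∀ i < n, w (i + 1) ≤ w i) (hS : ∀ i ≤ n, S i ≤ 1) :
    ∑ i ∈ range n, w i * (S (i + 1) - S i) ≤ w 0 * (1 - S 0) - w n * (1 - S n) := by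
  induction n with
  | zero => simp
  | succ n ih =>
    have hsum := ih (fun i hi => hw i (by omega)) (fun i hi => hS i (by omega))
    have hwn := hw n n.lt_succ_self
    have hSn := hS (n + 1) le_rfl
    rw [sum_range_succ]
    nlinarith [mul_le_mul_of_nonneg_right hwn (sub_nonneg.2 hSn)]

section

variable {f f' : ℝ → ℝ} {lam : ℝ}

theorem integral_cos_le_sin_sub_sin_div_add {u v : ℝ} (huv : u ≤ v)
    (hf : ∀ x ∈ Icc u v, HasDerivAt f (f' x) x) (hmono : MonotoneOn f' (Icc u v))
    (hlam : 0 < lam) (hu : lam ≤ f' u) :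
    ∫ x in u..v, cos (f x) ≤
      (sin (f v) - sin (f u)) / f' u + (v - u) * (f' v - f' u) / lam := by
  have hf'u : 0 < f' u := hlam.trans_le hu
  have hcos : ContinuousOn (fun x => cos (f x)) (Icc u v) :=
    continuous_cos.comp_continuousOn fun x hx => (hf x hx).continuousAt.continuousWithinAt
  have hI : uIcc u v = Icc u v := uIcc_of_le huv
  have hint : IntervalIntegrable (fun x => f' x * cos (f x)) MeasureTheory.volume u v :=
    (hI ▸ hmono).intervalIntegrable.mul_continuousOn (hI ▸ hcos)
  have hftc : ∫ x in u..v, f' x * cos (f x) = sin (f v) - sin (f u) :=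
    integral_eq_sub_of_hasDerivAt
      (fun x hx => ((hf x (hI ▸ hx)).sin).congr_deriv (mul_comm _ _)) hint
  have hpoint : ∀ x ∈ Icc u v,
      cos (f x) ≤ f' x * cos (f x) / f' u + (f' v - f' u) / lam := by
    intro x hx
    have hux : f' u ≤ f' x := hmono (left_mem_Icc.2 huv) hx hx.1
    have hxv : f' x ≤ f' v := hmono hx (right_mem_Icc.2 huv) hx.2
    have hsplit : cos (f x) = f' x * cos (f x) / f' u + cos (f x) * (f' u - f' x) / f' u := by
      field_simp; ring
    have herr : cos (f x) * (f' u - f' x) / f' u ≤ (f' v - f' u) / lam := by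
      refine (div_le_div_of_nonneg_right (b := f' x - f' u) ?_ hf'u.le).trans
        (div_le_div₀ (by linarith) (by linarith) hlam hu)
      nlinarith [neg_one_le_cos (f x)]
    linarith
  calc ∫ x in u..v, cos (f x)
      ≤ ∫ x in u..v, (f' x * cos (f x) / f' u + (f' v - f' u) / lam) :=
        integral_mono_on huv (hcos.intervalIntegrable_of_Icc huv)
          ((hint.div_const _).add intervalIntegrable_const) hpoint
    _ = (sin (f v) - sin (f u)) / f' u + (v - u) * (f' v - f' u) / lam := by
        rw [integral_add (hint.div_const _) intervalIntegrable_const, integral_div, hftc,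
          integral_const, smul_eq_mul, mul_div_assoc]

variable {a b : ℝ}

theorem integral_cos_le_of_partition (x : ℕ → ℝ) (n : ℕ) {δ : ℝ} (hx : Monotone x)
    (hx0 : x 0 = a) (hxn : x n = b) (hδ : ∀ i < n, x (i + 1) - x i ≤ δ)
    (hf : ∀ t ∈ Icc a b, HasDerivAt f (f' t) t) (hmono : MonotoneOn f' (Icc a b))
    (hlam : 0 < lam) (hlow : ∀ t ∈ Icc a b, lam ≤ f' t) :
    ∫ t in a..b, cos (f t) ≤ (1 - sin (f a)) / lam + δ * (f' b - f' a) / lam := by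
  have hmem : ∀ i ≤ n, x i ∈ Icc a b := fun i hi =>
    ⟨hx0 ▸ hx (Nat.zero_le i), hxn ▸ hx hi⟩
  have hsub : ∀ i < n, Icc (x i) (x (i + 1)) ⊆ Icc a b := fun i hi =>
    Icc_subset_Icc (hmem i hi.le).1 (hmem (i + 1) hi).2
  have hcos : ContinuousOn (fun t => cos (f t)) (Icc a b) :=
    continuous_cos.comp_continuousOn fun t ht => (hf t ht).continuousAt.continuousWithinAt
  have hint : ∀ i < n, IntervalIntegrable (fun t => cos (f t)) MeasureTheory.volume
      (x i) (x (i + 1)) := fun i hi =>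
    (hcos.mono (hsub i hi)).intervalIntegrable_of_Icc (hx i.le_succ)
  have hpiece : ∀ i ∈ range n, ∫ t in x i..x (i + 1), cos (f t) ≤
      (f' (x i))⁻¹ * (sin (f (x (i + 1))) - sin (f (x i))) +
        δ * (f' (x (i + 1)) - f' (x i)) / lam := by
    intro i hi
    rw [Finset.mem_range] at hi
    have hincr : 0 ≤ f' (x (i + 1)) - f' (x i) :=
      sub_nonneg.2 (hmono (hmem i hi.le) (hmem (i + 1) hi) (hx i.le_succ))
    refine (integral_cos_le_sin_sub_sin_div_add (hx i.le_succ)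
      (fun t ht => hf t (hsub i hi ht)) (hmono.mono (hsub i hi)) hlam
      (hlow _ (hmem i hi.le))).trans ?_
    rw [inv_mul_eq_div]
    gcongr
    exact hδ i hi
  have habel := sum_range_mul_sub_le_of_le_one (fun i => (f' (x i))⁻¹) (fun i => sin (f (x i)))
    n (fun i hi => inv_anti₀ (hlam.trans_le (hlow _ (hmem i hi.le)))
      (hmono (hmem i hi.le) (hmem (i + 1) hi) (hx i.le_succ))) (fun i _ => sin_le_one _)
  have hlast : 0 ≤ (f' b)⁻¹ * (1 - sin (f b)) :=
    mul_nonneg (inv_nonneg.2 (hlam.le.trans (hlow b (hxn ▸ hmem n le_rfl))))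
      (sub_nonneg.2 (sin_le_one _))
  have hfirst : (f' a)⁻¹ * (1 - sin (f a)) ≤ (1 - sin (f a)) / lam := by
    rw [inv_mul_eq_div]
    exact div_le_div_of_nonneg_left (sub_nonneg.2 (sin_le_one _)) hlam
      (hlow a (hx0 ▸ hmem 0 (Nat.zero_le n)))
  calc ∫ t in a..b, cos (f t) = ∑ i ∈ range n, ∫ t in x i..x (i + 1), cos (f t) := by
        rw [sum_integral_adjacent_intervals hint, hx0, hxn]
    _ ≤ ∑ i ∈ range n, ((f' (x i))⁻¹ * (sin (f (x (i + 1))) - sin (f (x i))) +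
          δ * (f' (x (i + 1)) - f' (x i)) / lam) := sum_le_sum hpiece
    _ = ∑ i ∈ range n, (f' (x i))⁻¹ * (sin (f (x (i + 1))) - sin (f (x i))) +
          δ * (f' b - f' a) / lam := by
        rw [sum_add_distrib, ← sum_div, ← mul_sum, sum_range_sub (fun i => f' (x i)), hx0, hxn]
    _ ≤ (1 - sin (f a)) / lam + δ * (f' b - f' a) / lam := by
        simp only [hx0, hxn] at habel
        linarith

theorem integral_cos_le_of_monotoneOn_deriv (hab : a ≤ b)
    (hf : ∀ t ∈ Icc a b, HasDerivAt f (f' t) t) (hmono : MonotoneOn f' (Icc a b))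
    (hlam : 0 < lam) (hlow : ∀ t ∈ Icc a b, lam ≤ f' t) :
    ∫ t in a..b, cos (f t) ≤ (1 - sin (f a)) / lam := by
  have huniform : ∀ n : ℕ, 0 < n →
      ∫ t in a..b, cos (f t) ≤ (1 - sin (f a)) / lam + (b - a) * (f' b - f' a) / lam / n := by
    intro n hn
    have hδ : 0 ≤ (b - a) / n := div_nonneg (sub_nonneg.2 hab) n.cast_nonneg
    refine (integral_cos_le_of_partition (fun i => a + i * ((b - a) / n)) n (δ := (b - a) / n)
      (fun i j hij => by dsimp only; gcongr) (by simp) (by field_simp; ring)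
      (fun i _ => le_of_eq (by push_cast; ring)) hf hmono hlam hlow).trans_eq ?_
    ring
  have hlim := (tendsto_const_div_atTop_nhds_zero_nat ((b - a) * (f' b - f' a) / lam)).const_add
    ((1 - sin (f a)) / lam)
  rw [add_zero] at hlim
  refine ge_of_tendsto hlim ?_
  exact Filter.eventually_atTop.2 ⟨1, fun n hn => huniform n hn⟩

end

theorem norm_intervalIntegral_exp_mul_I_eq {a b : ℝ} {f : ℝ → ℝ}
    (hf : ContinuousOn f (uIcc a b)) :
    ‖∫ x in a..b, Complex.exp (f x * Complex.I)‖ =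
      ∫ x in a..b, cos (f x - (∫ x in a..b, Complex.exp (f x * Complex.I)).arg) := by
  set I := ∫ x in a..b, Complex.exp (f x * Complex.I)
  set θ := I.arg
  have hrot : (‖I‖ : ℂ) = ∫ x in a..b, Complex.exp (↑(f x - θ) * Complex.I) := by
    calc (‖I‖ : ℂ) = I * Complex.exp (-θ * Complex.I) := by
          conv_rhs => rw [← Complex.norm_mul_exp_arg_mul_I I]
          rw [mul_assoc, ← Complex.exp_add]
          simp [θ]
      _ = _ := by
          rw [← integral_mul_const]
          congr 1 with x
          rw [← Complex.exp_add]; push_cast; ring_nf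
  have hint : IntervalIntegrable (fun x => Complex.exp (↑(f x - θ) * Complex.I))
      MeasureTheory.volume a b :=
    (by fun_prop : Continuous fun y : ℝ => Complex.exp (y * Complex.I)).comp_continuousOn
      (hf.sub continuousOn_const) |>.intervalIntegrable
  have := congrArg Complex.re hrot
  rw [Complex.ofReal_re, ← RCLike.re_to_complex, ← intervalIntegral_re hint] at this
  simpa only [RCLike.re_to_complex, Complex.exp_ofReal_mul_I_re] using this

theorem van_der_corput_first_general (a b lam : ℝ) (hab : a ≤ b) (f : ℝ → ℝ)
    (hmono : MonotoneOn (deriv f) (Set.Icc a b))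
    (hlam : 0 < lam) (hlow : ∀ x ∈ Set.Icc a b, lam ≤ deriv f x) :
    ‖∫ x in a..b, Complex.exp (f x * Complex.I)‖ ≤
      (1 + Real.sin ((∫ x in a..b, Complex.exp (f x * Complex.I)).arg - f a)) / lam ∧
    ‖∫ x in a..b, Complex.exp (f x * Complex.I)‖ ≤ 2 / lam := by
  have hf : ∀ x ∈ Icc a b, HasDerivAt f (deriv f x) x := fun x hx =>
    (differentiableAt_of_deriv_ne_zero (hlam.trans_le (hlow x hx)).ne').hasDerivAt
  set θ := (∫ x in a..b, Complex.exp (f x * Complex.I)).arg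
  have hnorm := norm_intervalIntegral_exp_mul_I_eq (a := a) (b := b) (f := f)
    (uIcc_of_le hab ▸ fun x hx => (hf x hx).continuousAt.continuousWithinAt)
  have hcos := integral_cos_le_of_monotoneOn_deriv (f := fun x => f x - θ) hab
    (fun x hx => (hf x hx).sub_const θ) hmono hlam hlow
  have hmain :
      ‖∫ x in a..b, Complex.exp (f x * Complex.I)‖ ≤ (1 + sin (θ - f a)) / lam := by
    rw [hnorm]
    rwa [← neg_sub θ, sin_neg, sub_neg_eq_add] at hcos
  exact ⟨hmain, hmain.trans
    (div_le_div_of_nonneg_right (by linarith [sin_le_one (θ - f a)]) hlam.le)⟩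

theorem van_der_corput_first (a b lam : ℝ) (hab : a ≤ b) (f : ℝ → ℝ)
    (hdf : DifferentiableOn ℝ f (Set.Ioo a b))
    (hmono : MonotoneOn (deriv f) (Set.Icc a b))
    (hlam : 0 < lam) (hlow : ∀ x ∈ Set.Icc a b, lam ≤ deriv f x) :
    ‖∫ x in a..b, Complex.exp (f x * Complex.I)‖ ≤
      (1 + Real.sin ((∫ x in a..b, Complex.exp (f x * Complex.I)).arg - f a)) / lam ∧
    ‖∫ x in a..b, Complex.exp (f x * Complex.I)‖ ≤ 2 / lam :=
  van_der_corput_first_general a b lam hab f hmono hlam hlow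
end

section
/- For every n ≥ 2, the van der Corput constant Cₙ = ((n-1)! · 2^(2n-1) / (n-1)^(n-2))^(1/n) satisfies Cₙ ≤ 2^(5/3), and Cₙ → 4/e as n → ∞. -/
open Real Filter Topology

-- 2 * m^m ≤ (m+1)^m for m ≥ 1
lemma vdc_aux1 (m : ℕ) (hm : 1 ≤ m) : 2 * m ^ m ≤ (m + 1) ^ m := by
  have hm' : (0:ℝ) < (m:ℝ) := by exact_mod_cast hm
  have h := one_add_mul_le_pow (a := 1/(m:ℝ)) (le_trans (by norm_num) (by positivity : (0:ℝ) ≤ 1/(m:ℝ))) m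
  have h2 : (2:ℝ) ≤ (1 + 1/(m:ℝ)) ^ m := by
    rw [mul_one_div, div_self hm'.ne'] at h; linarith
  have h3 : (2:ℝ) * (m:ℝ) ^ m ≤ ((m:ℝ) + 1) ^ m := by
    calc (2:ℝ) * (m:ℝ)^m ≤ (1 + 1/(m:ℝ))^m * (m:ℝ)^m := by
          apply mul_le_mul_of_nonneg_right h2 (by positivity)
      _ = ((m:ℝ) + 1)^m := by
          rw [← mul_pow]; congr 1; field_simp
  exact_mod_cast h3

lemma vdc_key (m : ℕ) (hm : 1 ≤ m) :
    m.factorial ^ 3 * 2 ^ m ≤ 4 * m ^ (3 * m - 3) := by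
  induction m, hm using Nat.le_induction with
  | base => decide
  | succ m hm ih =>
    rcases eq_or_lt_of_le hm with h | h
    · subst h; decide
    have hm2 : 2 ≤ m := h
    have step : 2 * m ^ (3 * m - 3) ≤ (m + 1) ^ (3 * m - 3) := by
      have hsplit : 3 * m - 3 = m + (2 * m - 3) := by omega
      rw [hsplit, pow_add, pow_add]
      calc 2 * (m ^ m * m ^ (2*m-3)) = (2 * m ^ m) * m ^ (2*m-3) := by ring
        _ ≤ (m+1)^m * (m+1)^(2*m-3) := by
            exact Nat.mul_le_mul (vdc_aux1 m hm) (Nat.pow_le_pow_left (by omega) _)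
    calc (m+1).factorial ^ 3 * 2 ^ (m+1)
        = (m+1)^3 * 2 * (m.factorial ^ 3 * 2 ^ m) := by
          rw [Nat.factorial_succ]; ring
      _ ≤ (m+1)^3 * 2 * (4 * m ^ (3*m-3)) := Nat.mul_le_mul_left _ ih
      _ = 4 * (m+1)^3 * (2 * m ^ (3*m-3)) := by ring
      _ ≤ 4 * (m+1)^3 * (m+1)^(3*m-3) := Nat.mul_le_mul_left _ step
      _ = 4 * (m+1)^(3*(m+1)-3) := by
          rw [mul_assoc, ← pow_add]; congr 2; omega


theorem van_der_corput_constant_bounds :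
    (∀ n : ℕ, 2 ≤ n →
      (((n - 1).factorial : ℝ) * 2 ^ (2 * n - 1) / (n - 1 : ℝ) ^ (n - 2)) ^ ((1 : ℝ) / n) ≤
        2 ^ ((5 : ℝ) / 3)) ∧
    Filter.Tendsto
      (fun n : ℕ =>
        (((n - 1).factorial : ℝ) * 2 ^ (2 * n - 1) / (n - 1 : ℝ) ^ (n - 2)) ^ ((1 : ℝ) / n))
      Filter.atTop (nhds (4 / Real.exp 1)) := by
  constructor
  · -- Bound part
    intro n hn
    obtain ⟨m, rfl⟩ : ∃ m, n = m + 2 := ⟨n - 2, by omega⟩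
    have h1 : m + 2 - 1 = m + 1 := rfl
    have h2 : m + 2 - 2 = m := rfl
    have h3 : 2 * (m + 2) - 1 = 2 * m + 3 := by omega
    rw [h1, h2, h3]
    have hc : ((m + 2 : ℕ) : ℝ) - 1 = (m : ℝ) + 1 := by push_cast; ring
    rw [hc]
    set r : ℝ := ((m + 1).factorial : ℝ) * 2 ^ (2 * m + 3) / ((m : ℝ) + 1) ^ m with hr_def
    have hfac : (0:ℝ) < ((m + 1).factorial : ℝ) := by exact_mod_cast (m+1).factorial_pos
    have hr : 0 < r := by positivity
    -- nat inequality
    have hk := vdc_key (m + 1) (by omega)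
    rw [show 3 * (m + 1) - 3 = 3 * m from by omega] at hk
    have hnat : (m + 1).factorial ^ 3 * 2 ^ (6 * m + 9) ≤ 2 ^ (5 * m + 10) * (m + 1) ^ (3 * m) := by
      calc (m + 1).factorial ^ 3 * 2 ^ (6 * m + 9)
          = ((m + 1).factorial ^ 3 * 2 ^ (m + 1)) * 2 ^ (5 * m + 8) := by
            rw [show 6 * m + 9 = (m + 1) + (5 * m + 8) from by omega, pow_add]; ring
        _ ≤ (4 * (m + 1) ^ (3 * m)) * 2 ^ (5 * m + 8) := Nat.mul_le_mul_right _ hk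
        _ = 2 ^ (5 * m + 10) * (m + 1) ^ (3 * m) := by
            rw [show 5 * m + 10 = (5 * m + 8) + 2 from by omega, pow_add]; ring
    have key3 : r ^ (3:ℕ) ≤ (2:ℝ) ^ (5 * m + 10) := by
      have hpow : (0:ℝ) < ((m : ℝ) + 1) ^ (3 * m) := by positivity
      have hr3 : r ^ (3:ℕ)
          = ((m + 1).factorial : ℝ) ^ 3 * 2 ^ (6 * m + 9) / ((m : ℝ) + 1) ^ (3 * m) := by
        rw [hr_def, div_pow, mul_pow, ← pow_mul, ← pow_mul]
        congr 2 <;> ring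
      rw [hr3, div_le_iff₀ hpow]
      exact_mod_cast hnat
    have hx : (0:ℝ) < ((m : ℝ) + 2) := by positivity
    have e1 : r ^ ((1:ℝ) / ((m + 2 : ℕ) : ℝ)) = (r ^ (3:ℕ)) ^ ((1:ℝ) / (3 * ((m:ℝ) + 2))) := by
      rw [← Real.rpow_natCast r 3, ← Real.rpow_mul hr.le]
      congr 1
      push_cast
      field_simp
    have e2 : ((2:ℝ) ^ (5 * m + 10 : ℕ)) ^ ((1:ℝ) / (3 * ((m:ℝ) + 2))) = 2 ^ ((5:ℝ) / 3) := by
      rw [← Real.rpow_natCast 2 (5 * m + 10), ← Real.rpow_mul (by norm_num)]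
      congr 1
      push_cast
      field_simp
      ring
    rw [e1, ← e2]
    exact Real.rpow_le_rpow (by positivity) key3 (by positivity)
  · -- Limit part
    set g : ℕ → ℝ := fun n =>
      Real.log (Stirling.stirlingSeq (n - 1)) * (1 / (n : ℝ))
        + (Real.log (2 * ((n : ℝ) - 1)) / (2 * ((n : ℝ) - 1))) * (((n : ℝ) - 1) / (n : ℝ))
        + (Real.log ((n : ℝ) - 1) / ((n : ℝ) - 1)) * (((n : ℝ) - 1) / (n : ℝ))
        - ((n : ℝ) - 1) / (n : ℝ)
        + (2 - 1 / (n : ℝ)) * Real.log 2 with hg_def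
    have h_sub : Tendsto (fun n : ℕ => (n : ℝ) - 1) atTop atTop := by
      simpa [sub_eq_add_neg] using
        tendsto_atTop_add_const_right atTop (-1 : ℝ) tendsto_natCast_atTop_atTop
    have hB : Tendsto (fun x : ℝ => Real.log x / x) atTop (𝓝 0) :=
      Real.isLittleO_log_id_atTop.tendsto_div_nhds_zero
    have h_inv : Tendsto (fun n : ℕ => 1 / (n : ℝ)) atTop (𝓝 0) :=
      tendsto_one_div_atTop_nhds_zero_nat
    have h_ratio : Tendsto (fun n : ℕ => ((n : ℝ) - 1) / (n : ℝ)) atTop (𝓝 1) := by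
      have h : Tendsto (fun n : ℕ => 1 - 1 / (n : ℝ)) atTop (𝓝 (1 - 0)) :=
        tendsto_const_nhds.sub h_inv
      rw [sub_zero] at h
      refine h.congr' ?_
      filter_upwards [eventually_ge_atTop 1] with n hn
      have hn0 : ((n : ℝ)) ≠ 0 := Nat.cast_ne_zero.mpr (by omega)
      field_simp
    have hA : Tendsto (fun n : ℕ => Real.log (Stirling.stirlingSeq (n - 1)) * (1 / (n : ℝ)))
        atTop (𝓝 0) := by
      have h1 : Tendsto (fun n : ℕ => Stirling.stirlingSeq (n - 1)) atTop (𝓝 (Real.sqrt Real.pi)) :=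
        Stirling.tendsto_stirlingSeq_sqrt_pi.comp (tendsto_sub_atTop_nat 1)
      have hpi : Real.sqrt Real.pi ≠ 0 := (Real.sqrt_pos.mpr Real.pi_pos).ne'
      have h2 : Tendsto (fun n : ℕ => Real.log (Stirling.stirlingSeq (n - 1))) atTop
          (𝓝 (Real.log (Real.sqrt Real.pi))) :=
        ((Real.continuousAt_log hpi).tendsto).comp h1
      simpa using h2.mul h_inv
    have h_log2m : Tendsto (fun n : ℕ => Real.log (2 * ((n : ℝ) - 1)) / (2 * ((n : ℝ) - 1)))
        atTop (𝓝 0) := hB.comp (h_sub.const_mul_atTop (by norm_num : (0:ℝ) < 2))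
    have h_logm : Tendsto (fun n : ℕ => Real.log ((n : ℝ) - 1) / ((n : ℝ) - 1))
        atTop (𝓝 0) := hB.comp h_sub
    have hg : Tendsto g atTop (𝓝 (2 * Real.log 2 - 1)) := by
      have c2 : Tendsto (fun _ : ℕ => (2:ℝ)) atTop (𝓝 2) := tendsto_const_nhds
      have cl2 : Tendsto (fun _ : ℕ => Real.log 2) atTop (𝓝 (Real.log 2)) := tendsto_const_nhds
      have H := ((((hA.add (h_log2m.mul h_ratio)).add (h_logm.mul h_ratio)).sub h_ratio).add
        ((c2.sub h_inv).mul cl2))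
      rw [hg_def]
      convert H using 2
      ring
    have h_eq : (fun n : ℕ => Real.exp (g n)) =ᶠ[atTop]
        (fun n : ℕ =>
          (((n - 1).factorial : ℝ) * 2 ^ (2 * n - 1) / (n - 1 : ℝ) ^ (n - 2)) ^ ((1 : ℝ) / n)) := by
      filter_upwards [eventually_ge_atTop 2] with n hn
      obtain ⟨m, rfl⟩ : ∃ m, n = m + 2 := ⟨n - 2, by omega⟩
      have h1 : m + 2 - 1 = m + 1 := rfl
      have h2 : m + 2 - 2 = m := rfl
      have h3 : 2 * (m + 2) - 1 = 2 * m + 3 := by omega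
      rw [h1, h2, h3]
      have hc : ((m + 2 : ℕ) : ℝ) - 1 = (m : ℝ) + 1 := by push_cast; ring
      have hcpos : (0:ℝ) < (m : ℝ) + 1 := by positivity
      have hxpos : (0:ℝ) < ((m + 2 : ℕ) : ℝ) := by positivity
      rw [hc]
      set s : ℝ := Stirling.stirlingSeq (m + 1) with hs_def
      have hs : 0 < s := Stirling.stirlingSeq'_pos m
      have hfac : ((m + 1).factorial : ℝ)
          = s * (Real.sqrt (2 * ((m:ℝ) + 1)) * (((m:ℝ) + 1) / Real.exp 1) ^ (m + 1)) := by
        rw [hs_def, Stirling.stirlingSeq]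
        have hd : Real.sqrt (2 * (((m+1):ℕ):ℝ)) * ((((m+1):ℕ):ℝ) / Real.exp 1) ^ (m+1) ≠ 0 := by
          have : (0:ℝ) < (((m+1):ℕ):ℝ) := by positivity
          positivity
        push_cast at hd ⊢
        field_simp
      set r : ℝ := ((m + 1).factorial : ℝ) * 2 ^ (2 * m + 3) / ((m : ℝ) + 1) ^ m with hr_def
      have hfacpos : (0:ℝ) < ((m + 1).factorial : ℝ) := by exact_mod_cast (m+1).factorial_pos
      have hr : 0 < r := by positivity
      rw [Real.rpow_def_of_pos hr]
      congr 1
      have hlogr : Real.log r = Real.log s + Real.log (2 * ((m:ℝ) + 1)) / 2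
          + ((m:ℝ) + 1) * (Real.log ((m:ℝ) + 1) - 1)
          + (2 * (m:ℝ) + 3) * Real.log 2 - (m:ℝ) * Real.log ((m:ℝ) + 1) := by
        rw [hr_def, Real.log_div (by positivity) (by positivity),
          Real.log_mul (by positivity) (by positivity), Real.log_pow, Real.log_pow, hfac,
          Real.log_mul hs.ne' (by positivity),
          Real.log_mul (by positivity) (by positivity), Real.log_sqrt (by positivity),
          Real.log_pow, Real.log_div hcpos.ne' (Real.exp_ne_zero 1), Real.log_exp]
        push_cast
        ring
      rw [hg_def]
      simp only [hlogr]
      have hx1 : ((m + 2 : ℕ) : ℝ) = (m:ℝ) + 2 := by push_cast; ring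
      have hx2 : (m + 2 - 1 : ℕ) = m + 1 := rfl
      rw [hx2, ← hs_def, hx1, show (m:ℝ) + 2 - 1 = (m:ℝ) + 1 from by ring]
      have hxne : ((m:ℝ) + 2) ≠ 0 := by positivity
      field_simp
      ring
    refine Tendsto.congr' h_eq ?_
    have := (Real.continuous_exp.tendsto (2 * Real.log 2 - 1)).comp hg
    have hval : Real.exp (2 * Real.log 2 - 1) = 4 / Real.exp 1 := by
      rw [Real.exp_sub, two_mul, Real.exp_add, Real.exp_log (by norm_num : (0:ℝ) < 2)]
      norm_num
    rw [← hval]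
    exact this
end
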